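/- arXiv:1901.08721 — 7 statements merged into one kernel-verified Lean document; each statement's English description precedes it below -/
import Mathlib

section
/- Let (a_k)_{k≥0} be a sequence of complex numbers with a_0 ≠ 0 and limsup_{k→∞} |a_k|^{1/k} = ∞. Set A_n = max_{1≤k≤n} |a_k|^{1/k} and p_n(z) = ∑_{k=0}^n a_k A_n^{-k} z^k. Suppose the gauge G of (a_k) satisfies G < 1. Then there exist γ ∈ (0, 1/2) and r > 1 such that liminf_{n→∞} (1/n)·#{ zeros w of p_n, counted with multiplicity, with |w| < r } ≤ 1 − γ. In particular the zero counting measures of (p_n) do not converge weakly to the uniform probability measure on the unit circle, i.e., (p_n) does not belong to the Szegö class. -/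
/-!
Choose `c` with `G < c < 1` and `γ` with `L(γ) < c`. For infinitely many `n` every coefficient
of `p_n` of index `k ≥ (1 - γ) n` then has modulus at most `c ^ k`, the others at most `1`, and
the constant term is `a_0`. With `R = 1 / c`, Jensen's formula in the form of the Mahler measure
of `p_n (R z)` gives `|a_0| (R / r) ^ N ≤ ∑ R ^ k |coeff_k| ≤ (n + 1) max 1 |a_0| R ^ ((1 - γ) n)`,
where `N` counts the zeros of `p_n` in `|w| < r`. For `r = R ^ (γ / 2)` this forces
`N ≤ (1 - γ / 4) n` once `n` is large. A bump function equal to `1` on the unit circle and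
supported in `|w| < r` then keeps the zero counting measures away from `Λ`.
-/

open Filter Polynomial
open scoped Classical Real

theorem rpow_pow_mul_rpow_le_div_rpow_pow {R γ : ℝ} (hR : 1 ≤ R) (hγ1 : γ ≤ 1) {n N : ℕ}
    (hN : (1 - γ / 4) * n < N) :
    (R ^ (γ / 4)) ^ n * R ^ ((1 - γ) * n) ≤ (R / R ^ (γ / 2)) ^ N := by
  have hR0 : 0 < R := one_pos.trans_le hR
  rw [← Real.rpow_natCast, ← Real.rpow_natCast, ← Real.rpow_mul hR0.le, ← Real.rpow_add hR0,
    ← Real.rpow_one_sub' hR0.le (by linarith), ← Real.rpow_mul hR0.le]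
  apply Real.rpow_le_rpow_of_exponent_le hR
  nlinarith [mul_le_mul_of_nonneg_left hN.le (by linarith : (0 : ℝ) ≤ 1 - γ / 2),
    mul_nonneg (sq_nonneg γ) n.cast_nonneg]

theorem eventually_add_one_mul_lt_mul_pow {s : ℝ} (hs : 1 < s) (C : ℝ) {b : ℝ} (hb : 0 < b) :
    ∀ᶠ n : ℕ in atTop, ((n : ℝ) + 1) * C < b * s ^ n := by
  have hρ0 : 0 ≤ s⁻¹ := inv_nonneg.mpr (by linarith)
  have hρ1 : s⁻¹ < 1 := inv_lt_one_of_one_lt₀ hs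
  have hlim : Tendsto (fun n : ℕ ↦ ((n : ℝ) * s⁻¹ ^ n + s⁻¹ ^ n) * C) atTop (nhds 0) := by
    simpa using ((tendsto_self_mul_const_pow_of_lt_one hρ0 hρ1).add
      (tendsto_pow_atTop_nhds_zero_of_lt_one hρ0 hρ1)).mul_const C
  filter_upwards [hlim.eventually_lt_const hb] with n hn
  have hsn : 0 < s ^ n := by positivity
  have hcancel : s⁻¹ ^ n * s ^ n = 1 := by rw [inv_pow, inv_mul_cancel₀ hsn.ne']
  calc ((n : ℝ) + 1) * C = ((n : ℝ) * s⁻¹ ^ n + s⁻¹ ^ n) * C * s ^ n := by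
        linear_combination (-((n : ℝ) + 1) * C) * hcancel
    _ < b * s ^ n := by gcongr

theorem norm_mul_inv_pow_le_pow {z : ℂ} {A t : ℝ} {k : ℕ} (hk : k ≠ 0) (hA : 0 ≤ A)
    (ht : ‖z‖ ^ (k⁻¹ : ℝ) / A ≤ t) : ‖z * (A : ℂ)⁻¹ ^ k‖ ≤ t ^ k := by
  rw [norm_mul, norm_pow, norm_inv, Complex.norm_real, Real.norm_of_nonneg hA, inv_pow,
    ← Real.rpow_inv_natCast_pow (norm_nonneg z) hk, ← div_eq_mul_inv, ← div_pow]
  exact pow_le_pow_left₀ (by positivity) ht k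

namespace Multiset

theorem prod_map_norm_le_pow_card_filter_mul_prod_max_one (s : Multiset ℂ) {ρ : ℝ} (hρ : 0 ≤ ρ) :
    (s.map (‖·‖)).prod ≤ ρ ^ (s.filter (‖·‖ < ρ)).card * (s.map fun w ↦ max 1 ‖w‖).prod := by
  induction s using Multiset.induction with
  | empty => simp
  | cons w s ih =>
    have hP : 0 ≤ (s.map (‖·‖)).prod := prod_nonneg fun x hx ↦ by
      obtain ⟨y, -, rfl⟩ := mem_map.mp hx; exact norm_nonneg y
    by_cases hw : ‖w‖ < ρ
    · rw [filter_cons_of_pos s hw]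
      simp only [map_cons, prod_cons, card_cons, pow_succ]
      calc ‖w‖ * (s.map (‖·‖)).prod
          ≤ (ρ * max 1 ‖w‖) * (ρ ^ (s.filter (‖·‖ < ρ)).card * (s.map fun w ↦ max 1 ‖w‖).prod) := by
            gcongr
            exact hw.le.trans (le_mul_of_one_le_right hρ (le_max_left _ _))
        _ = _ := by ring
    · rw [filter_cons_of_neg s hw]
      simp only [map_cons, prod_cons]
      calc ‖w‖ * (s.map (‖·‖)).prod
          ≤ max 1 ‖w‖ * (ρ ^ (s.filter (‖·‖ < ρ)).card * (s.map fun w ↦ max 1 ‖w‖).prod) := by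
            gcongr
            exact le_max_right _ _
        _ = _ := by ring

theorem sum_map_le_card_filter_norm_lt {h : ℂ → ℝ} {r : ℝ} (h_le : ∀ z, h z ≤ 1)
    (h_zero : ∀ z, r ≤ ‖z‖ → h z = 0) (s : Multiset ℂ) :
    (s.map h).sum ≤ (s.filter (‖·‖ < r)).card := by
  induction s using Multiset.induction with
  | empty => simp
  | cons w s ih =>
    by_cases hw : ‖w‖ < r
    · rw [filter_cons_of_pos s hw, map_cons, sum_cons,
        card_cons, Nat.cast_succ, add_comm]
      exact add_le_add ih (h_le w)
    · rw [filter_cons_of_neg s hw, map_cons, sum_cons,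
        h_zero w (not_lt.mp hw), zero_add]
      exact ih

end Multiset

namespace Polynomial

theorem norm_coeff_zero_le_pow_mul_mahlerMeasure (p : ℂ[X]) {ρ : ℝ} (hρ : 0 ≤ ρ) :
    ‖p.coeff 0‖ ≤ ρ ^ (p.roots.filter (‖·‖ < ρ)).card * p.mahlerMeasure := by
  rw [(IsAlgClosed.splits p).coeff_zero_eq_leadingCoeff_mul_prod_roots,
    mahlerMeasure_eq_leadingCoeff_mul_prod_roots, norm_mul, norm_mul, norm_pow, norm_neg, norm_one,
    one_pow, one_mul, mul_left_comm]
  gcongr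
  calc ‖p.roots.prod‖ = (p.roots.map (‖·‖)).prod := (Multiset.prod_hom _ (normHom : ℂ →*₀ ℝ)).symm
    _ ≤ _ := Multiset.prod_map_norm_le_pow_card_filter_mul_prod_max_one _ hρ

theorem norm_coeff_zero_mul_pow_card_roots_le_sum {p : ℂ[X]} {n : ℕ} (hp : p.natDegree ≤ n)
    {r R : ℝ} (hr : 0 < r) (hR : 0 < R) :
    ‖p.coeff 0‖ * (R / r) ^ (p.roots.filter (‖·‖ < r)).card
      ≤ ∑ k ∈ Finset.range (n + 1), ‖p.coeff k‖ * R ^ k := by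
  set q := p.comp (C (R : ℂ) * X)
  have hR' : (R : ℂ) ≠ 0 := by exact_mod_cast hR.ne'
  have hroots : q.roots = p.roots.map ((R : ℂ)⁻¹ * ·) := by
    simpa using roots_comp_C_mul_X_add_C p (R : ℂ) 0 (isUnit_iff_ne_zero.mpr hR')
  have hcard : (q.roots.filter (‖·‖ < r / R)).card = (p.roots.filter (‖·‖ < r)).card := by
    rw [hroots, Multiset.filter_map, Multiset.card_map]
    congr 2
    ext w
    simp [abs_of_pos hR, inv_mul_lt_iff₀ hR, mul_div_cancel₀ _ hR.ne']
  have hq0 : q.coeff 0 = p.coeff 0 := by simp [q]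
  have hdeg : q.natDegree < n + 1 := by
    rw [natDegree_comp, natDegree_C_mul_X _ hR', mul_one]
    omega
  have hM : q.mahlerMeasure ≤ ∑ k ∈ Finset.range (n + 1), ‖p.coeff k‖ * R ^ k := by
    refine (mahlerMeasure_le_sum_norm_coeff q).trans_eq ?_
    rw [sum_over_range' _ (fun _ ↦ norm_zero) _ hdeg]
    simp [q, abs_of_pos hR]
  have key := norm_coeff_zero_le_pow_mul_mahlerMeasure q (div_pos hr hR).le
  rw [hcard, hq0] at key
  calc ‖p.coeff 0‖ * (R / r) ^ (p.roots.filter (‖·‖ < r)).card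
      ≤ (r / R) ^ (p.roots.filter (‖·‖ < r)).card * q.mahlerMeasure
          * (R / r) ^ (p.roots.filter (‖·‖ < r)).card := by gcongr
    _ = q.mahlerMeasure := by
      rw [mul_right_comm, ← mul_pow, div_mul_div_cancel₀ hR.ne', div_self hr.ne', one_pow, one_mul]
    _ ≤ _ := hM

theorem sum_norm_coeff_mul_pow_le {p : ℂ[X]} {n : ℕ} {R x : ℝ} (hR : 1 ≤ R) (hx : 0 ≤ x)
    (h_one : ∀ k ≤ n, 1 ≤ k → ‖p.coeff k‖ ≤ 1) (h_tail : ∀ k ≤ n, x ≤ k → ‖p.coeff k‖ ≤ R⁻¹ ^ k) :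
    ∑ k ∈ Finset.range (n + 1), ‖p.coeff k‖ * R ^ k
      ≤ (n + 1) * (max 1 ‖p.coeff 0‖ * R ^ x) := by
  have hRx : 1 ≤ R ^ x := Real.one_le_rpow hR hx
  have hterm : ∀ k ∈ Finset.range (n + 1), ‖p.coeff k‖ * R ^ k ≤ max 1 ‖p.coeff 0‖ * R ^ x := by
    intro k hk
    have hkn : k ≤ n := Finset.mem_range_succ_iff.mp hk
    have hRk : 0 < R ^ k := by positivity
    by_cases hxk : x ≤ k
    · calc ‖p.coeff k‖ * R ^ k ≤ R⁻¹ ^ k * R ^ k := by gcongr; exact h_tail k hkn hxk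
        _ = 1 := by rw [inv_pow, inv_mul_cancel₀ hRk.ne']
        _ ≤ max 1 ‖p.coeff 0‖ * R ^ x :=
          (le_max_left _ _).trans (le_mul_of_one_le_right (by positivity) hRx)
    · have hRk_le : R ^ k ≤ R ^ x := by
        rw [← Real.rpow_natCast]
        exact Real.rpow_le_rpow_of_exponent_le hR (not_le.mp hxk).le
      rcases Nat.eq_zero_or_pos k with rfl | hk1
      · simpa using (le_max_right 1 _).trans (le_mul_of_one_le_right (by positivity) hRx)
      · calc ‖p.coeff k‖ * R ^ k ≤ 1 * R ^ x := by gcongr; exact h_one k hkn hk1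
          _ ≤ max 1 ‖p.coeff 0‖ * R ^ x := by gcongr; exact le_max_left _ _
  calc ∑ k ∈ Finset.range (n + 1), ‖p.coeff k‖ * R ^ k
      ≤ (Finset.range (n + 1)).card • (max 1 ‖p.coeff 0‖ * R ^ x) :=
        Finset.sum_le_card_nsmul _ _ _ hterm
    _ = (n + 1) * (max 1 ‖p.coeff 0‖ * R ^ x) := by simp

theorem coeff_sum_range_C_mul_X_pow {S : Type*} [Semiring S] (b : ℕ → S) (n k : ℕ) :
    (∑ i ∈ Finset.range (n + 1), C (b i) * X ^ i).coeff k = if k ≤ n then b k else 0 := by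
  simp

theorem natDegree_sum_range_C_mul_X_pow_le {S : Type*} [Semiring S] (b : ℕ → S) (n : ℕ) :
    (∑ i ∈ Finset.range (n + 1), C (b i) * X ^ i).natDegree ≤ n :=
  natDegree_sum_le_of_forall_le _ _ fun i hi ↦
    natDegree_C_mul_X_pow_le (b i) i |>.trans (Finset.mem_range_succ_iff.mp hi)

theorem card_roots_lt_le_of_norm_coeff_le {p : ℂ[X]} {n : ℕ} (hp : p.natDegree ≤ n) {R γ : ℝ}
    (hR : 1 ≤ R) (hγ : γ ≤ 1)
    (h_one : ∀ k ≤ n, 1 ≤ k → ‖p.coeff k‖ ≤ 1)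
    (h_tail : ∀ k ≤ n, (1 - γ) * n ≤ k → ‖p.coeff k‖ ≤ R⁻¹ ^ k)
    (h_growth : ((n : ℝ) + 1) * max 1 ‖p.coeff 0‖ < ‖p.coeff 0‖ * (R ^ (γ / 4)) ^ n) :
    ((p.roots.filter (‖·‖ < R ^ (γ / 2))).card : ℝ) ≤ (1 - γ / 4) * n := by
  by_contra! hN
  have hR0 : 0 < R := one_pos.trans_le hR
  have hRx : 0 < R ^ ((1 - γ) * n) := by positivity
  have hsum := sum_norm_coeff_mul_pow_le hR (by nlinarith [n.cast_nonneg (α := ℝ)]) h_one h_tail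
  have hzeros := norm_coeff_zero_mul_pow_card_roots_le_sum hp (Real.rpow_pos_of_pos hR0 (γ / 2)) hR0
  have hexp := rpow_pow_mul_rpow_le_div_rpow_pow hR hγ hN
  have : ‖p.coeff 0‖ * (R ^ (γ / 4)) ^ n * R ^ ((1 - γ) * n)
      ≤ (n + 1) * max 1 ‖p.coeff 0‖ * R ^ ((1 - γ) * n) := by
    calc ‖p.coeff 0‖ * (R ^ (γ / 4)) ^ n * R ^ ((1 - γ) * n)
        ≤ ‖p.coeff 0‖ * (R / R ^ (γ / 2)) ^ (p.roots.filter (‖·‖ < R ^ (γ / 2))).card := by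
          rw [mul_assoc]; exact mul_le_mul_of_nonneg_left hexp (norm_nonneg _)
      _ ≤ _ := hzeros.trans hsum
      _ = _ := by ring
  linarith [le_of_mul_le_mul_right this hRx]

end Polynomial

theorem exists_frequently_div_lt {A : ℕ → ℝ} {B : ℝ → ℕ → ℝ} {L : ℝ → ℝ} {G : ℝ}
    (hL : ∀ γ ∈ Set.Ioo (0 : ℝ) 1,
      ((L γ : ℝ) : EReal) = liminf (fun n : ℕ ↦ ((B γ n / A n : ℝ) : EReal)) atTop)
    (hG : Tendsto L (nhdsWithin 0 (Set.Ioi 0)) (nhds G)) (hGlt : G < 1) :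
    ∃ c ∈ Set.Ioo (0 : ℝ) 1, ∃ γ ∈ Set.Ioo (0 : ℝ) 1, ∃ᶠ n in atTop, B γ n / A n < c := by
  obtain ⟨c, hGc, hc1⟩ := exists_between (max_lt hGlt one_pos)
  obtain ⟨γ, hLγ, hγ⟩ := ((hG.eventually_lt_const (lt_of_le_of_lt (le_max_left _ _) hGc)).and
    (Ioo_mem_nhdsGT one_pos)).exists
  refine ⟨c, ⟨lt_of_le_of_lt (le_max_right _ _) hGc, hc1⟩, γ, hγ, ?_⟩
  have hlt : liminf (fun n : ℕ ↦ ((B γ n / A n : ℝ) : EReal)) atTop < (c : EReal) := by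
    rw [← hL γ hγ]; exact_mod_cast hLγ
  exact (frequently_lt_of_liminf_lt (by isBoundedDefault) hlt).mono fun n hn ↦ by exact_mod_cast hn

theorem exists_liminf_card_roots_le {a : ℕ → ℂ} {A : ℕ → ℝ} {B : ℝ → ℕ → ℝ} {L : ℝ → ℝ}
    {G : ℝ} {P : ℕ → ℂ[X]} (ha0 : a 0 ≠ 0)
    (hA : ∀ n : ℕ, 1 ≤ n → IsGreatest
      {x : ℝ | ∃ k : ℕ, 1 ≤ k ∧ k ≤ n ∧ x = ‖a k‖ ^ ((k : ℝ)⁻¹)} (A n))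
    (hB : ∀ γ ∈ Set.Ioo (0 : ℝ) 1, ∀ n : ℕ, 1 ≤ n → IsGreatest
      {x : ℝ | ∃ k : ℕ, (1 - γ) * (n : ℝ) ≤ (k : ℝ) ∧ k ≤ n ∧
        x = ‖a k‖ ^ ((k : ℝ)⁻¹)} (B γ n))
    (hL : ∀ γ ∈ Set.Ioo (0 : ℝ) 1,
      ((L γ : ℝ) : EReal) = liminf (fun n : ℕ ↦ ((B γ n / A n : ℝ) : EReal)) atTop)
    (hG : Tendsto L (nhdsWithin 0 (Set.Ioi 0)) (nhds G)) (hGlt : G < 1)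
    (hP : ∀ n : ℕ, P n = ∑ k ∈ Finset.range (n + 1), C (a k * ((A n : ℂ))⁻¹ ^ k) * X ^ k) :
    ∃ γ ∈ Set.Ioo (0 : ℝ) (1 / 2), ∃ r : ℝ, 1 < r ∧
      liminf (fun n : ℕ ↦
          (((1 / (n : ℝ)) * (((P n).roots.filter fun w ↦ ‖w‖ < r).card : ℝ) : ℝ) : EReal))
        atTop ≤ ((1 - γ : ℝ) : EReal) := by
  obtain ⟨c, ⟨hc0, hc1⟩, γ, hγ, hfreq⟩ := exists_frequently_div_lt hL hG hGlt
  have hR : 1 < c⁻¹ := one_lt_inv₀ hc0 |>.mpr hc1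
  have hgrowth := eventually_add_one_mul_lt_mul_pow
    (Real.one_lt_rpow hR (by linarith [hγ.1] : 0 < γ / 4)) (max 1 ‖a 0‖) (norm_pos_iff.mpr ha0)
  refine ⟨γ / 4, ⟨by linarith [hγ.1], by linarith [hγ.2]⟩, c⁻¹ ^ (γ / 2),
    Real.one_lt_rpow hR (by linarith [hγ.1]), liminf_le_of_frequently_le' ?_⟩
  refine (hfreq.and_eventually (hgrowth.and (eventually_ge_atTop 1))).mono ?_
  rintro n ⟨hBA, hgrowth_n, hn⟩
  have hcoeff (k : ℕ) : (P n).coeff k = if k ≤ n then a k * ((A n : ℂ))⁻¹ ^ k else 0 := by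
    rw [hP n, coeff_sum_range_C_mul_X_pow]
  have hA0 : 0 ≤ A n := by
    obtain ⟨k, -, -, hk⟩ := (hA n hn).1
    exact hk ▸ by positivity
  have hn0 : (0 : ℝ) < n := by exact_mod_cast hn
  have hN := card_roots_lt_le_of_norm_coeff_le (p := P n) (n := n) (R := c⁻¹) (γ := γ)
    (hP n ▸ natDegree_sum_range_C_mul_X_pow_le _ n) hR.le hγ.2.le
    (fun k hkn hk ↦ by
      rw [hcoeff, if_pos hkn, ← one_pow k]
      exact norm_mul_inv_pow_le_pow (by omega) hA0
        (div_le_one_of_le₀ ((hA n hn).2 ⟨k, hk, hkn, rfl⟩) hA0))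
    (fun k hkn hk ↦ by
      have hk0 : k ≠ 0 := by rintro rfl; simp only [CharP.cast_eq_zero] at hk; nlinarith [hγ.2]
      rw [hcoeff, if_pos hkn, inv_inv]
      exact norm_mul_inv_pow_le_pow hk0 hA0
        ((div_le_div_of_nonneg_right ((hB γ hγ n hn).2 ⟨k, hk, hkn, rfl⟩) hA0).trans hBA.le))
    (by simpa [hcoeff] using hgrowth_n)
  have : (1 / (n : ℝ)) * (((P n).roots.filter fun w ↦ ‖w‖ < c⁻¹ ^ (γ / 2)).card : ℝ)
      ≤ 1 - γ / 4 := by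
    rw [one_div_mul_eq_div, div_le_iff₀ hn0]; exact hN
  exact_mod_cast this

theorem not_forall_tendsto_of_liminf_card_roots_le (P : ℕ → ℂ[X]) {γ r : ℝ} (hγ : 0 < γ)
    (hr : 1 < r)
    (hlim : liminf (fun n : ℕ ↦
          (((1 / (n : ℝ)) * (((P n).roots.filter fun w ↦ ‖w‖ < r).card : ℝ) : ℝ) : EReal))
        atTop ≤ ((1 - γ : ℝ) : EReal)) :
    ¬ (∀ h : ℂ → ℝ, Continuous h → HasCompactSupport h →
      Tendsto (fun n : ℕ ↦ (1 / (n : ℝ)) * ((P n).roots.map h).sum) atTop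
        (nhds ((1 / (2 * π)) * ∫ θ in (0 : ℝ)..(2 * π), h (Complex.exp (θ * Complex.I))))) := by
  intro hweak
  let f : ContDiffBump (0 : ℂ) := ⟨1, r, one_pos, hr⟩
  have hf_circle (θ : ℝ) : f (Complex.exp (θ * Complex.I)) = 1 :=
    f.one_of_mem_closedBall (by simp [f])
  have hf_zero (z : ℂ) (hz : r ≤ ‖z‖) : f z = 0 :=
    Function.notMem_support.mp (by rw [f.support_eq]; simpa [f] using hz)
  have hT := hweak f f.continuous f.hasCompactSupport
  simp only [hf_circle, intervalIntegral.integral_const, smul_eq_mul, mul_one, sub_zero] at hT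
  rw [one_div_mul_cancel (by positivity)] at hT
  have hle (n : ℕ) : (1 / (n : ℝ)) * ((P n).roots.map f).sum
      ≤ (1 / (n : ℝ)) * (((P n).roots.filter fun w ↦ ‖w‖ < r).card : ℝ) :=
    mul_le_mul_of_nonneg_left
      (Multiset.sum_map_le_card_filter_norm_lt (fun _ ↦ f.le_one) hf_zero _) (by positivity)
  have h1 : ((1 : ℝ) : EReal) ≤ ((1 - γ : ℝ) : EReal) := by
    calc ((1 : ℝ) : EReal)
        = liminf (fun n : ℕ ↦ (((1 / (n : ℝ)) * ((P n).roots.map f).sum : ℝ) : EReal)) atTop :=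
          ((EReal.tendsto_coe.mpr hT).liminf_eq).symm
      _ ≤ _ := liminf_le_liminf (Eventually.of_forall fun n ↦ EReal.coe_le_coe_iff.mpr (hle n))
      _ ≤ _ := hlim
  linarith [EReal.coe_le_coe_iff.mp h1]

theorem stmt_1_general (a : ℕ → ℂ) (A : ℕ → ℝ) (B : ℝ → ℕ → ℝ) (L : ℝ → ℝ) (G : ℝ)
    (P : ℕ → Polynomial ℂ)
    (ha0 : a 0 ≠ 0)
    (hA : ∀ n : ℕ, 1 ≤ n → IsGreatest
      {x : ℝ | ∃ k : ℕ, 1 ≤ k ∧ k ≤ n ∧ x = ‖a k‖ ^ ((k : ℝ)⁻¹)} (A n))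
    (hB : ∀ γ ∈ Set.Ioo (0 : ℝ) 1, ∀ n : ℕ, 1 ≤ n → IsGreatest
      {x : ℝ | ∃ k : ℕ, (1 - γ) * (n : ℝ) ≤ (k : ℝ) ∧ k ≤ n ∧
        x = ‖a k‖ ^ ((k : ℝ)⁻¹)} (B γ n))
    (hL : ∀ γ ∈ Set.Ioo (0 : ℝ) 1,
      ((L γ : ℝ) : EReal) = Filter.liminf (fun n : ℕ => ((B γ n / A n : ℝ) : EReal))
        Filter.atTop)
    (hG : Filter.Tendsto L (nhdsWithin 0 (Set.Ioi (0 : ℝ))) (nhds G))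
    (hGlt : G < 1)
    (hP : ∀ n : ℕ, P n = ∑ k ∈ Finset.range (n + 1),
      Polynomial.C (a k * ((A n : ℂ))⁻¹ ^ k) * Polynomial.X ^ k) :
    (∃ γ ∈ Set.Ioo (0 : ℝ) (1 / 2), ∃ r : ℝ, 1 < r ∧
      Filter.liminf (fun n : ℕ =>
          (((1 / (n : ℝ)) *
            (((P n).roots.filter fun w => ‖w‖ < r).card : ℝ) : ℝ) : EReal))
        Filter.atTop ≤ ((1 - γ : ℝ) : EReal)) ∧
    ¬ (∀ h : ℂ → ℝ, Continuous h → HasCompactSupport h →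
      Filter.Tendsto (fun n : ℕ => (1 / (n : ℝ)) * ((P n).roots.map h).sum)
        Filter.atTop
        (nhds ((1 / (2 * Real.pi)) *
          ∫ θ in (0 : ℝ)..(2 * Real.pi), h (Complex.exp (θ * Complex.I))))) := by
  obtain ⟨γ, hγ, r, hr, hlim⟩ := exists_liminf_card_roots_le ha0 hA hB hL hG hGlt hP
  exact ⟨⟨γ, hγ, r, hr, hlim⟩, not_forall_tendsto_of_liminf_card_roots_le P hγ.1 hr hlim⟩

/-- "only if" direction of the main theorem. If the power series
`∑ a_k z^k` has null radius of convergence, `a_0 ≠ 0`, and its gauge `G < 1`, then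
there exist `γ ∈ (0, 1/2)` and `r > 1` such that the liminf of the fraction of zeros of
the normalized sections `p_n` lying in `{|w| < r}` is at most `1 - γ`; in particular the
zero counting measures of `(p_n)` do not converge weakly to the uniform probability
measure on the unit circle. -/
theorem stmt_1 (a : ℕ → ℂ) (A : ℕ → ℝ) (B : ℝ → ℕ → ℝ) (L : ℝ → ℝ) (G : ℝ)
    (P : ℕ → Polynomial ℂ)
    (ha0 : a 0 ≠ 0)
    (hrad : Filter.limsup
      (fun k : ℕ => ((‖a k‖ ^ ((k : ℝ)⁻¹) : ℝ) : EReal)) Filter.atTop = ⊤)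
    (hA : ∀ n : ℕ, 1 ≤ n → IsGreatest
      {x : ℝ | ∃ k : ℕ, 1 ≤ k ∧ k ≤ n ∧ x = ‖a k‖ ^ ((k : ℝ)⁻¹)} (A n))
    (hB : ∀ γ ∈ Set.Ioo (0 : ℝ) 1, ∀ n : ℕ, 1 ≤ n → IsGreatest
      {x : ℝ | ∃ k : ℕ, (1 - γ) * (n : ℝ) ≤ (k : ℝ) ∧ k ≤ n ∧
        x = ‖a k‖ ^ ((k : ℝ)⁻¹)} (B γ n))
    (hL : ∀ γ ∈ Set.Ioo (0 : ℝ) 1,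
      ((L γ : ℝ) : EReal) = Filter.liminf (fun n : ℕ => ((B γ n / A n : ℝ) : EReal))
        Filter.atTop)
    (hG : Filter.Tendsto L (nhdsWithin 0 (Set.Ioi (0 : ℝ))) (nhds G))
    (hGlt : G < 1)
    (hP : ∀ n : ℕ, P n = ∑ k ∈ Finset.range (n + 1),
      Polynomial.C (a k * ((A n : ℂ))⁻¹ ^ k) * Polynomial.X ^ k) :
    (∃ γ ∈ Set.Ioo (0 : ℝ) (1 / 2), ∃ r : ℝ, 1 < r ∧
      Filter.liminf (fun n : ℕ =>
          (((1 / (n : ℝ)) *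
            (((P n).roots.filter fun w => ‖w‖ < r).card : ℝ) : ℝ) : EReal))
        Filter.atTop ≤ ((1 - γ : ℝ) : EReal)) ∧
    ¬ (∀ h : ℂ → ℝ, Continuous h → HasCompactSupport h →
      Filter.Tendsto (fun n : ℕ => (1 / (n : ℝ)) * ((P n).roots.map h).sum)
        Filter.atTop
        (nhds ((1 / (2 * Real.pi)) *
          ∫ θ in (0 : ℝ)..(2 * Real.pi), h (Complex.exp (θ * Complex.I))))) :=
  stmt_1_general a A B L G P ha0 hA hB hL hG hGlt hP
end

section
/- Let n ≥ 1, let P(z) = ∑_{k=0}^n b_k z^k be a polynomial of degree n with b_0 ≠ 0, and let 1 ≤ m ≤ n. Then there exists a real v > 0 such that |b_0| ≤ e^{n·H((m−1)/n)} · ( max_{n−m+1 ≤ k ≤ n} |b_k| ) · max{1, v}^n, and P has at least m zeros (counted with multiplicity) whose absolute values are at least v. -/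
/-!
Order the roots by modulus, `|r₁| ≥ ⋯ ≥ |rₙ|`, and take `v = |rₘ|`; at least `m` roots have
modulus `≥ v`. Write `P = G · T` with `G = c ∏_{i<m} (z - rᵢ)` and `T = ∏_{i≥m} (z - rᵢ)`.
For the reversed polynomials, `G* = P* · ∏_{i≥m} (1 - rᵢ z)⁻¹` as power series, and since
`|rᵢ| ≤ v ≤ u := max 1 v` the product of geometric series is majorized coefficientwise by
`(1 - u z)^{-(n-m+1)}`. The coefficient of `z^{m-1}` then gives
`|G(0)| ≤ C(n, m-1) · M · u^{m-1}`, where `M` bounds the top `m` coefficients of `P`, while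
`|T(0)| ≤ v^{n-m+1}`. Finally `C(n, k) pᵏ (1-p)^{n-k} ≤ 1` at `p = k/n` is exactly
`C(n, k) ≤ e^{n H(k/n)}`.
-/

open Filter Polynomial
open scoped Classical Real

/-- The binary entropy function `H(x) = x log(1/x) + (1-x) log(1/(1-x))`
(with `H(0) = H(1) = 0`, since `Real.log 0 = 0` in Mathlib). -/
noncomputable def entropyH (x : ℝ) : ℝ :=
  x * Real.log (1 / x) + (1 - x) * Real.log (1 / (1 - x))

namespace PowerSeries

variable {R : Type*} [SeminormedCommRing R]

def MajorizedBy (p : R⟦X⟧) (q : ℝ⟦X⟧) : Prop :=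
  ∀ n, ‖coeff n p‖ ≤ coeff n q

theorem norm_coeff_mul_le {f g : R⟦X⟧} {F G : ℝ⟦X⟧} {n : ℕ}
    (hf : ∀ k ≤ n, ‖coeff k f‖ ≤ coeff k F) (hg : ∀ k ≤ n, ‖coeff k g‖ ≤ coeff k G) :
    ‖coeff n (f * g)‖ ≤ coeff n (F * G) := by
  rw [coeff_mul, coeff_mul]
  refine (norm_sum_le _ _).trans (Finset.sum_le_sum fun ij hij => ?_)
  have hij : ij.1 + ij.2 = n := Finset.HasAntidiagonal.mem_antidiagonal.mp hij
  have hi : ij.1 ≤ n := by omega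
  have hj : ij.2 ≤ n := by omega
  exact (norm_mul_le _ _).trans <|
    mul_le_mul (hf _ hi) (hg _ hj) (norm_nonneg _) ((norm_nonneg _).trans (hf _ hi))

theorem MajorizedBy.mul {p p' : R⟦X⟧} {q q' : ℝ⟦X⟧} (h : MajorizedBy p q)
    (h' : MajorizedBy p' q') : MajorizedBy (p * p') (q * q') :=
  fun _ => norm_coeff_mul_le (fun k _ => h k) (fun k _ => h' k)

theorem MajorizedBy.multiset_prod [NormOneClass R] {ι : Type*} {s : Multiset ι}
    {f : ι → R⟦X⟧} {g : ι → ℝ⟦X⟧} (h : ∀ i ∈ s, MajorizedBy (f i) (g i)) :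
    MajorizedBy (s.map f).prod (s.map g).prod := by
  induction s using Multiset.induction_on with
  | empty => intro n; rcases n with _ | n <;> simp [coeff_one]
  | cons a s ih =>
    simp only [Multiset.map_cons, Multiset.prod_cons]
    exact (h a (Multiset.mem_cons_self a s)).mul (ih fun i hi => h i (Multiset.mem_cons_of_mem hi))

theorem majorizedBy_mk_pow [NormOneClass R] {r : R} {u : ℝ} (hr : ‖r‖ ≤ u) :
    MajorizedBy (mk (r ^ ·)) (mk (u ^ ·)) := fun n => by
  simpa using (norm_pow_le r n).trans (pow_le_pow_left₀ (norm_nonneg r) hr n)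

theorem coeff_mk_pow_pow {S : Type*} [CommRing S] (u : S) (d n : ℕ) :
    coeff n ((mk (u ^ ·)) ^ (d + 1)) = (d + n).choose d * u ^ n := by
  have : (mk (u ^ ·) : S⟦X⟧) = rescale u (mk 1) := by simp [rescale_mk]
  rw [this, ← map_pow, mk_one_pow_eq_mk_choose_add, coeff_rescale, coeff_mk, mul_comm]

theorem one_sub_C_mul_X_mul_mk_pow {S : Type*} [CommRing S] (r : S) :
    (1 - C r * X) * mk (r ^ ·) = 1 := by
  have h := congrArg (rescale r) (mk_one_mul_one_sub_eq_one S)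
  simpa [rescale_mk, mul_comm] using h

end PowerSeries

namespace Polynomial

theorem reverse_one {R : Type*} [Semiring R] : (1 : R[X]).reverse = 1 := by
  simpa using reverse_C (1 : R)

theorem reverse_X_sub_C {R : Type*} [Ring R] [Nontrivial R] (b : R) :
    (X - C b).reverse = 1 - C b * X := by
  have hX : (X : R[X]).reverse = 1 := by simpa [reverse_one] using reverse_mul_X (1 : R[X])
  rw [sub_eq_add_neg, ← C_neg, reverse_add_C, hX, natDegree_X, pow_one, C_neg, neg_mul,
    ← sub_eq_add_neg]

theorem coe_reverse_prod_X_sub_C_mul_prod_mk_pow {K : Type*} [CommRing K] [IsDomain K]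
    (B : Multiset K) :
    ((B.map fun b => X - C b).prod.reverse : PowerSeries K) *
      (B.map fun b => PowerSeries.mk (b ^ ·)).prod = 1 := by
  induction B using Multiset.induction_on with
  | empty => simp [reverse_one]
  | cons b B ih =>
    simp only [Multiset.map_cons, Multiset.prod_cons, reverse_mul_of_domain, coe_mul,
      reverse_X_sub_C]
    rw [mul_mul_mul_comm, ih, mul_one]
    push_cast
    exact PowerSeries.one_sub_C_mul_X_mul_mk_pow b

variable {K : Type*} [NormedField K]

theorem norm_coeff_zero_prod_X_sub_C_le {B : Multiset K} {u : ℝ}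
    (hB : ∀ b ∈ B, ‖b‖ ≤ u) :
    ‖((B.map fun b => X - C b).prod).coeff 0‖ ≤ u ^ Multiset.card B := by
  rw [coeff_zero_multiset_prod, Multiset.map_map]
  simp only [Function.comp_def, coeff_sub, coeff_X_zero, coeff_C_zero, zero_sub,
    Multiset.prod_map_neg, norm_mul, norm_pow, norm_neg, norm_one, one_pow, one_mul]
  have hnorm : ‖B.prod‖ = (B.map (normHom : K →*₀ ℝ)).prod := map_multiset_prod normHom B
  rw [hnorm]
  exact Multiset.prod_map_le_pow_card (fun x _ => norm_nonneg x) hB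

theorem norm_coeff_zero_le_of_eq_mul_prod_X_sub_C {P G : K[X]} {B : Multiset K} {u M : ℝ}
    (hP : P = G * (B.map fun b => X - C b).prod) (hu : 1 ≤ u) (hB : ∀ b ∈ B, ‖b‖ ≤ u)
    (hM : ∀ k ≤ G.natDegree, ‖P.coeff (P.natDegree - k)‖ ≤ M) :
    ‖G.coeff 0‖ ≤
      (Multiset.card B + G.natDegree).choose (Multiset.card B) * M * u ^ G.natDegree := by
  set d := G.natDegree
  set U : PowerSeries ℝ := PowerSeries.mk (u ^ ·)
  have hdeg : d ≤ P.natDegree := by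
    rcases eq_or_ne G 0 with hG | hG
    · simp [d, hG]
    · have hT := monic_multiset_prod_of_monic B (fun b => X - C b) fun b _ => monic_X_sub_C b
      rw [hP, natDegree_mul hG hT.ne_zero]
      exact Nat.le_add_right _ _
  have hrev : (G.reverse : PowerSeries K) =
      P.reverse * (B.map fun b => PowerSeries.mk (b ^ ·)).prod := by
    rw [hP, reverse_mul_of_domain, coe_mul, mul_assoc, coe_reverse_prod_X_sub_C_mul_prod_mk_pow,
      mul_one]
  have hPrev : ∀ k ≤ d, ‖PowerSeries.coeff k (P.reverse : PowerSeries K)‖ ≤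
      PowerSeries.coeff k (PowerSeries.C M * U) := fun k hk => by
    rw [coeff_coe, coeff_reverse, revAt_le (hk.trans hdeg), PowerSeries.coeff_C_mul,
      PowerSeries.coeff_mk]
    exact (hM k hk).trans <| le_mul_of_one_le_right ((norm_nonneg _).trans (hM k hk))
      (one_le_pow₀ hu)
  have hinv : PowerSeries.MajorizedBy (B.map fun b => PowerSeries.mk (b ^ ·)).prod
      (U ^ Multiset.card B) := by
    rw [← Multiset.prod_replicate, ← Multiset.map_const']
    exact PowerSeries.MajorizedBy.multiset_prod fun b hb => PowerSeries.majorizedBy_mk_pow (hB b hb)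
  calc ‖G.coeff 0‖ = ‖PowerSeries.coeff d (G.reverse : PowerSeries K)‖ := by
        rw [coeff_coe, coeff_reverse, revAt_le le_rfl, Nat.sub_self]
    _ ≤ PowerSeries.coeff d (PowerSeries.C M * U * U ^ Multiset.card B) := by
        rw [hrev]
        exact PowerSeries.norm_coeff_mul_le hPrev fun k _ => hinv k
    _ = _ := by
        rw [mul_assoc, ← pow_succ', PowerSeries.coeff_C_mul, PowerSeries.coeff_mk_pow_pow]
        ring

theorem norm_coeff_zero_le_choose_mul {P G : K[X]} {B : Multiset K} {u M : ℝ}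
    (hP : P = G * (B.map fun b => X - C b).prod) (hu : 1 ≤ u)
    (hB : ∀ b ∈ B, ‖b‖ ≤ u) (hM : ∀ k ≤ G.natDegree, ‖P.coeff (P.natDegree - k)‖ ≤ M) :
    ‖P.coeff 0‖ ≤
      (Multiset.card B + G.natDegree).choose (Multiset.card B) * M *
        u ^ (G.natDegree + Multiset.card B) := by
  have hG := norm_coeff_zero_le_of_eq_mul_prod_X_sub_C hP hu hB hM
  have hT := norm_coeff_zero_prod_X_sub_C_le hB
  calc ‖P.coeff 0‖ = ‖G.coeff 0‖ * ‖((B.map fun b => X - C b).prod).coeff 0‖ := by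
        rw [hP, mul_coeff_zero, norm_mul]
    _ ≤ _ := by
        rw [pow_add, ← mul_assoc]
        exact mul_le_mul hG hT (norm_nonneg _) ((norm_nonneg _).trans hG)

theorem norm_coeff_zero_le_of_roots_eq_add {P : K[X]} (hsplit : P.Splits) (hP0 : P ≠ 0)
    {A B : Multiset K} (hroots : P.roots = A + B) {u M : ℝ} (hu : 1 ≤ u) (hB : ∀ b ∈ B, ‖b‖ ≤ u)
    (hM : ∀ k ≤ Multiset.card A, ‖P.coeff (P.natDegree - k)‖ ≤ M) :
    ‖P.coeff 0‖ ≤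
      (Multiset.card B + Multiset.card A).choose (Multiset.card B) * M *
        u ^ (Multiset.card A + Multiset.card B) := by
  set G := C P.leadingCoeff * (A.map fun a => X - C a).prod
  have hP : P = G * (B.map fun b => X - C b).prod := by
    rw [mul_assoc, ← Multiset.prod_add, ← Multiset.map_add, ← hroots]
    exact hsplit.eq_prod_roots
  have hG : G.natDegree = Multiset.card A := by
    rw [natDegree_C_mul (leadingCoeff_ne_zero.mpr hP0), natDegree_multiset_prod_X_sub_C_eq_card]
  rw [← hG] at hM ⊢
  exact norm_coeff_zero_le_choose_mul hP hu hB hM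

end Polynomial

theorem Multiset.exists_eq_add_of_le_card {α β : Type*} [LinearOrder β] (f : α → β) {k : ℕ} :
    ∀ {s : Multiset α}, k ≤ card s →
      ∃ A B, s = A + B ∧ card A = k ∧ ∀ a ∈ A, ∀ b ∈ B, f b ≤ f a := by
  induction k with
  | zero => exact fun {s} _ => ⟨0, s, by simp, rfl, by simp⟩
  | succ k ih =>
    intro s hk
    obtain ⟨a, ha, hmax⟩ := exists_max_image f (s := s) (card_pos.mp (by omega))
    obtain ⟨s', rfl⟩ := exists_cons_of_mem ha
    obtain ⟨A, B, rfl, hA, hAB⟩ := ih (s := s') (by simpa using hk)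
    refine ⟨a ::ₘ A, B, by simp, by simp [hA], ?_⟩
    simp only [mem_cons, forall_eq_or_imp]
    exact ⟨fun b hb => hmax b (by simp [hb]), hAB⟩

theorem Nat.choose_mul_pow_mul_pow_le_one {p : ℝ} (hp₀ : 0 ≤ p) (hp₁ : p ≤ 1) {n k : ℕ}
    (hk : k ≤ n) : (n.choose k : ℝ) * (p ^ k * (1 - p) ^ (n - k)) ≤ 1 := by
  have hq₀ : 0 ≤ 1 - p := by linarith
  have hsum := (add_pow p (1 - p) n).symm
  rw [add_sub_cancel, one_pow] at hsum
  calc (n.choose k : ℝ) * (p ^ k * (1 - p) ^ (n - k))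
      = p ^ k * (1 - p) ^ (n - k) * n.choose k := by ring
    _ ≤ ∑ i ∈ Finset.range (n + 1), p ^ i * (1 - p) ^ (n - i) * n.choose i :=
        Finset.single_le_sum (f := fun i => p ^ i * (1 - p) ^ (n - i) * (n.choose i : ℝ))
          (fun i _ => by positivity) (Finset.mem_range.mpr (by omega))
    _ = 1 := hsum

theorem Nat.choose_le_exp_mul_entropyH {n k : ℕ} (hk : k ≤ n) :
    (n.choose k : ℝ) ≤ Real.exp (n * entropyH (k / n)) := by
  rcases Nat.eq_zero_or_pos k with rfl | hk₀
  · simp [entropyH]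
  rcases hk.eq_or_lt with rfl | hkn
  · simp [entropyH, div_self (by positivity : (k : ℝ) ≠ 0)]
  have hn : (0 : ℝ) < n := by exact_mod_cast hk₀.trans hkn
  set p : ℝ := k / n
  have hp₀ : 0 < p := by positivity
  have hp₁ : p < 1 := (div_lt_one hn).mpr (by exact_mod_cast hkn)
  have hq₀ : 0 < 1 - p := by linarith
  have hnp : n * p = k := mul_div_cancel₀ _ hn.ne'
  have hnq : n * (1 - p) = (n - k : ℕ) := by
    rw [Nat.cast_sub hk, mul_sub, mul_one, hnp]
  have hexp : Real.exp (n * entropyH p) = (p ^ k * (1 - p) ^ (n - k))⁻¹ := by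
    rw [entropyH, mul_add, ← mul_assoc, ← mul_assoc, hnp, hnq, Real.exp_add, Real.exp_nat_mul,
      Real.exp_nat_mul, Real.exp_log (by positivity), Real.exp_log (by positivity), one_div,
      one_div, inv_pow, inv_pow, mul_inv]
  rw [hexp, ← one_div, le_div_iff₀ (by positivity)]
  exact Nat.choose_mul_pow_mul_pow_le_one hp₀.le hp₁.le hk

open Multiset in
/-- Lemma 2.3, a consequence of Van Vleck's bounds. For any polynomial
`P(z) = ∑_{k=0}^n b_k z^k` of degree `n ≥ 1` with `b_0 ≠ 0` and any `1 ≤ m ≤ n`, there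
is a radius `v > 0` such that
`|b_0| ≤ e^{n H((m-1)/n)} · (max_{n-m+1 ≤ k ≤ n} |b_k|) · max{1, v}^n`
and `P` has at least `m` zeros (with multiplicity) of absolute value at least `v`. -/
theorem stmt_2 (n m : ℕ) (P : Polynomial ℂ) (hdeg : P.natDegree = n)
    (hb0 : P.coeff 0 ≠ 0) (hm1 : 1 ≤ m) (hmn : m ≤ n) :
    ∃ v : ℝ, 0 < v ∧
      ‖P.coeff 0‖ ≤
        Real.exp ((n : ℝ) * entropyH (((m : ℝ) - 1) / (n : ℝ))) *
          ((Finset.Icc (n - m + 1) n).sup' (Finset.nonempty_Icc.mpr (by omega))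
            fun k => ‖P.coeff k‖) *
          max 1 v ^ n ∧
      m ≤ (P.roots.filter fun w => v ≤ ‖w‖).card := by
  have hsplit : P.Splits := IsAlgClosed.splits P
  have hcard : card P.roots = n := hdeg ▸ splits_iff_card_roots.mp hsplit
  obtain ⟨A, B, hroots, hA, hAB⟩ :=
    P.roots.exists_eq_add_of_le_card (‖·‖) (k := m - 1) (by omega)
  have hB : card B = n - m + 1 := by
    have := congrArg card hroots
    rw [card_add] at this
    omega
  obtain ⟨b₀, hb₀, hb₀_max⟩ := B.exists_max_image (‖·‖) (card_pos.mp (by omega))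
  refine ⟨‖b₀‖, norm_pos_iff.mpr ?_, ?_, ?_⟩
  · rintro rfl
    have h0 : (0 : ℂ) ∈ P.roots := hroots ▸ mem_add.mpr (Or.inr hb₀)
    exact hb0 (coeff_zero_eq_eval_zero P ▸ isRoot_of_mem_roots h0)
  · have hP0 : P ≠ 0 := fun h => hb0 (by simp [h])
    set M := (Finset.Icc (n - m + 1) n).sup' (Finset.nonempty_Icc.mpr (by omega))
      fun k => ‖P.coeff k‖
    have hM : ∀ k ≤ card A, ‖P.coeff (P.natDegree - k)‖ ≤ M := fun k hk =>
      Finset.le_sup' (fun k => ‖P.coeff k‖) (Finset.mem_Icc.mpr (by omega))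
    have hbound := norm_coeff_zero_le_of_roots_eq_add hsplit hP0 hroots (le_max_left 1 ‖b₀‖)
      (fun b hb => (hb₀_max b hb).trans (le_max_right 1 ‖b₀‖)) hM
    rw [hA, hB, show n - m + 1 + (m - 1) = n by omega, show m - 1 + (n - m + 1) = n by omega,
      ← Nat.choose_symm (by omega), show n - (n - m + 1) = m - 1 by omega] at hbound
    refine hbound.trans ?_
    gcongr
    · exact (norm_nonneg _).trans (hM 0 (Nat.zero_le _))
    · simpa [Nat.cast_sub hm1] using Nat.choose_le_exp_mul_entropyH (n := n) (k := m - 1) (by omega)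
  · rw [hroots, filter_add, card_add, filter_eq_self.mpr fun a ha => hAB a ha b₀ hb₀, hA]
    have hb₀_mem : 0 < card (B.filter fun w => ‖b₀‖ ≤ ‖w‖) :=
      card_pos_iff_exists_mem.mpr ⟨b₀, by simp [hb₀]⟩
    omega
end

section
/- Let (p_n)_{n∈ℕ} be a sequence of complex polynomials and (k_n)_{n∈ℕ} a sequence of positive integers with k_n ≥ deg(p_n) for all n. Suppose that: (a) limsup_{n→∞} (1/k_n) · max_{|z| ≤ 1} log|p_n(z)| ≤ 0, and (b) there exists a compact subset S of { z ∈ ℂ : |z| > 1 } such that liminf_{n→∞} max_{z ∈ S} |p_n(z)|^{1/k_n} / |z| ≥ 1. Then for every compact subset K of { z ∈ ℂ : |z| > 1 }, (1/k_n)·#{ zeros w of p_n in K, counted with multiplicity } → 0 as n → ∞. -/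
/-!
Let `m` be the number of zeros of `p = p_n` in `K` and `M = max_{|z| ≤ 1} |p|`. Moving each of
these zeros `w` to `1 / w̄` gives a polynomial `q` of degree `≤ k` with `|q| = |p|` on the unit
circle, so `|q(z)| ≤ M |z|^k` for `|z| ≥ 1` by the maximum principle applied to the reversed
polynomial. At a point `z ∈ S` every moved zero contributes a factor
`|z - w| / |w̄ z - 1| ≤ c`, where `c < 1` by compactness of `S × K`; hence
`|p(z)| ≤ c^m M |z|^k`. Hypothesis (a) gives `M ≤ e^{o(k)}`, hypothesis (b) gives a `z ∈ S` with
`|p(z)| ≥ e^{-o(k)} |z|^k`, and together they force `m log (1/c) = o(k)`.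
-/

open Filter Polynomial
open scoped Classical Real ComplexConjugate

theorem norm_conj_mul_sub_one_sq (z w : ℂ) :
    ‖conj w * z - 1‖ ^ 2 = ‖z - w‖ ^ 2 + (‖z‖ ^ 2 - 1) * (‖w‖ ^ 2 - 1) := by
  simp only [Complex.sq_norm, Complex.normSq_apply, Complex.sub_re, Complex.sub_im,
    Complex.mul_re, Complex.mul_im, Complex.one_re, Complex.one_im, Complex.conj_re,
    Complex.conj_im]
  ring

theorem norm_conj_mul_sub_one_of_norm_eq_one {u : ℂ} (hu : ‖u‖ = 1) (w : ℂ) :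
    ‖conj w * u - 1‖ = ‖u - w‖ := by
  have h := norm_conj_mul_sub_one_sq u w
  rw [hu] at h
  exact (pow_left_inj₀ (norm_nonneg _) (norm_nonneg _) two_ne_zero).1 (by simpa using h)

theorem norm_sub_lt_norm_conj_mul_sub_one {z w : ℂ} (hz : 1 < ‖z‖) (hw : 1 < ‖w‖) :
    ‖z - w‖ < ‖conj w * z - 1‖ := by
  have h := norm_conj_mul_sub_one_sq z w
  have : 0 < (‖z‖ ^ 2 - 1) * (‖w‖ ^ 2 - 1) := by
    apply mul_pos <;> nlinarith
  exact lt_of_pow_lt_pow_left₀ 2 (norm_nonneg _) (by linarith)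

theorem exists_forall_norm_sub_le_mul_norm_conj_mul_sub_one {S K : Set ℂ} (hS : IsCompact S)
    (hK : IsCompact K) (hS1 : S ⊆ {z | 1 < ‖z‖}) (hK1 : K ⊆ {w | 1 < ‖w‖}) :
    ∃ c, 0 < c ∧ c < 1 ∧ ∀ z ∈ S, ∀ w ∈ K, ‖z - w‖ ≤ c * ‖conj w * z - 1‖ := by
  have hden : ∀ x ∈ S ×ˢ K, 0 < ‖conj x.2 * x.1 - 1‖ := fun x hx =>
    (norm_nonneg _).trans_lt (norm_sub_lt_norm_conj_mul_sub_one (hS1 hx.1) (hK1 hx.2))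
  have hcont : ContinuousOn (fun x : ℂ × ℂ => ‖x.1 - x.2‖ / ‖conj x.2 * x.1 - 1‖) (S ×ˢ K) :=
    ContinuousOn.div (by fun_prop) (by fun_prop) fun x hx => (hden x hx).ne'
  obtain ⟨c, hc1, hc⟩ := IsCompact.exists_forall_le' (α := ℝᵒᵈ) (hS.prod hK) hcont
    (a := (1 : ℝ)) fun x hx => (div_lt_one (hden x hx)).2 <|
      norm_sub_lt_norm_conj_mul_sub_one (hS1 hx.1) (hK1 hx.2)
  refine ⟨max c (1 / 2), by positivity, max_lt hc1 (by norm_num), fun z hz w hw => ?_⟩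
  have h := hden (z, w) ⟨hz, hw⟩
  have hzw : ‖z - w‖ / ‖conj w * z - 1‖ ≤ c := hc (z, w) ⟨hz, hw⟩
  rw [← div_le_iff₀ h]
  exact hzw.trans (le_max_left _ _)

theorem Multiset.norm_prod_map {ι 𝕜 : Type*} [NormedField 𝕜] (s : Multiset ι) (f : ι → 𝕜) :
    ‖(s.map f).prod‖ = (s.map fun w => ‖f w‖).prod := by
  simpa [Multiset.map_map] using map_multiset_prod normHom (s.map f)

namespace Polynomial

theorem norm_eval_le_mul_norm_pow_of_forall_norm_eq_one {q : ℂ[X]} {k : ℕ}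
    (hq : q.natDegree ≤ k) {M : ℝ} (hM : ∀ u : ℂ, ‖u‖ = 1 → ‖q.eval u‖ ≤ M) {z : ℂ}
    (hz : 1 ≤ ‖z‖) : ‖q.eval z‖ ≤ M * ‖z‖ ^ k := by
  have eval_eq_reflect : ∀ {x : ℂ}, x ≠ 0 → ‖q.eval x‖ = ‖(q.reflect k).eval x⁻¹‖ * ‖x‖ ^ k := by
    intro x hx
    let := invertibleOfNonzero hx
    simpa [eval₂_id, invOf_eq_inv] using
      congrArg norm (eval₂_reflect_mul_pow (RingHom.id ℂ) x k q hq).symm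
  have hsphere : ∀ u ∈ frontier (Metric.ball (0 : ℂ) 1), ‖(q.reflect k).eval u‖ ≤ M := by
    intro u hu
    rw [frontier_ball 0 one_ne_zero, mem_sphere_zero_iff_norm] at hu
    have hu' : ‖u⁻¹‖ = 1 := by rw [norm_inv, hu, inv_one]
    have h := eval_eq_reflect (x := u⁻¹) <|
      inv_ne_zero (norm_ne_zero_iff.1 (hu.trans_ne one_ne_zero))
    rw [inv_inv, hu', one_pow, mul_one] at h
    exact h ▸ hM u⁻¹ hu'
  have hz' : z⁻¹ ∈ closure (Metric.ball (0 : ℂ) 1) := by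
    rw [closure_ball 0 one_ne_zero, mem_closedBall_zero_iff, norm_inv]
    exact inv_le_one_of_one_le₀ hz
  rw [eval_eq_reflect (norm_pos_iff.1 (one_pos.trans_le hz))]
  gcongr
  exact Complex.norm_le_of_forall_mem_frontier_norm_le Metric.isBounded_ball
    (q.reflect k).differentiable.diffContOnCl hsphere hz'

/-- `p` with the roots `w ∈ s` moved to `(conj w)⁻¹` (to infinity when `w = 0`). -/
noncomputable def reflectRoots (p : ℂ[X]) (s : Multiset ℂ) : ℂ[X] :=
  p /ₘ (s.map fun w => X - C w).prod * (s.map fun w => C (conj w) * X - 1).prod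

variable {p : ℂ[X]} {s : Multiset ℂ}

theorem eval_eq_eval_divByMonic_mul (hs : s ≤ p.roots) (z : ℂ) :
    p.eval z = (p /ₘ (s.map fun w => X - C w).prod).eval z * (s.map fun w => z - w).prod := by
  have hdvd : (s.map fun w => X - C w).prod ∣ p := by
    rcases eq_or_ne p 0 with rfl | hp
    · exact dvd_zero _
    · exact (Multiset.prod_X_sub_C_dvd_iff_le_roots hp s).2 hs
  conv_lhs => rw [← modByMonic_add_div p (s.map fun w => X - C w).prod,
    (modByMonic_eq_zero_iff_dvd (monic_multisetProd_X_sub_C s)).2 hdvd]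
  simp [eval_multiset_prod, mul_comm]

theorem eval_reflectRoots (z : ℂ) : (reflectRoots p s).eval z =
    (p /ₘ (s.map fun w => X - C w).prod).eval z * (s.map fun w => conj w * z - 1).prod := by
  simp [reflectRoots, eval_multiset_prod]

theorem natDegree_reflectRoots_le (hs : s ≤ p.roots) :
    (reflectRoots p s).natDegree ≤ p.natDegree := by
  have hcard : Multiset.card s ≤ p.natDegree := (Multiset.card_le_card hs).trans p.card_roots'
  have hfactor : (s.map fun w => C (conj w) * X - 1).prod.natDegree ≤ Multiset.card s := by
    refine (natDegree_multiset_prod_le _).trans ?_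
    have := Multiset.sum_le_card_nsmul ((s.map fun w => C (conj w) * X - 1).map natDegree) 1 ?_
    · simpa using this
    · simp only [Multiset.map_map, Function.comp_apply, Multiset.mem_map]
      rintro _ ⟨w, _, rfl⟩
      compute_degree
  calc (reflectRoots p s).natDegree
      ≤ (p.natDegree - Multiset.card s) + Multiset.card s := by
        rw [reflectRoots]
        refine natDegree_mul_le_of_le ?_ hfactor
        rw [natDegree_divByMonic _ (monic_multisetProd_X_sub_C s),
          natDegree_multiset_prod_X_sub_C_eq_card]
    _ = p.natDegree := Nat.sub_add_cancel hcard

theorem norm_eval_reflectRoots_of_norm_eq_one (hs : s ≤ p.roots) {u : ℂ} (hu : ‖u‖ = 1) :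
    ‖(reflectRoots p s).eval u‖ = ‖p.eval u‖ := by
  simp only [eval_reflectRoots, eval_eq_eval_divByMonic_mul hs, norm_mul, Multiset.norm_prod_map,
    norm_conj_mul_sub_one_of_norm_eq_one hu]

theorem norm_eval_le_pow_card_mul_norm_eval_reflectRoots (hs : s ≤ p.roots) {z : ℂ} {c : ℝ}
    (h : ∀ w ∈ s, ‖z - w‖ ≤ c * ‖conj w * z - 1‖) :
    ‖p.eval z‖ ≤ c ^ Multiset.card s * ‖(reflectRoots p s).eval z‖ := by
  rw [eval_eq_eval_divByMonic_mul hs, eval_reflectRoots, norm_mul, norm_mul,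
    Multiset.norm_prod_map, Multiset.norm_prod_map, mul_left_comm, ← Multiset.prod_replicate,
    ← Multiset.map_const', ← Multiset.prod_map_mul]
  gcongr
  exact Multiset.prod_map_le_prod_map₀ _ _ (fun _ _ => norm_nonneg _) h

theorem norm_eval_le_pow_card_roots_filter_mul {k : ℕ} (hp : p.natDegree ≤ k) {M : ℝ}
    (hM : ∀ u : ℂ, ‖u‖ = 1 → ‖p.eval u‖ ≤ M) {K : Set ℂ} {z : ℂ} (hz : 1 ≤ ‖z‖) {c : ℝ}
    (hc : 0 ≤ c) (hcK : ∀ w ∈ K, ‖z - w‖ ≤ c * ‖conj w * z - 1‖) :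
    ‖p.eval z‖ ≤ c ^ (p.roots.filter (· ∈ K)).card * (M * ‖z‖ ^ k) := by
  have hs : p.roots.filter (· ∈ K) ≤ p.roots := Multiset.filter_le _ _
  refine (norm_eval_le_pow_card_mul_norm_eval_reflectRoots hs
    fun w hw => hcK w (Multiset.mem_filter.1 hw).2).trans ?_
  gcongr
  refine norm_eval_le_mul_norm_pow_of_forall_norm_eq_one
    ((natDegree_reflectRoots_le hs).trans hp) (fun u hu => ?_) hz
  exact (norm_eval_reflectRoots_of_norm_eq_one hs hu).trans_le (hM u hu)

theorem card_roots_filter_mul_log_inv_le {k : ℕ} (hp : p.natDegree ≤ k) {t : ℝ}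
    (hM : ∀ u : ℂ, ‖u‖ = 1 → ‖p.eval u‖ ≤ Real.exp t) {K : Set ℂ} {z : ℂ} (hz : 1 ≤ ‖z‖)
    (hlow : Real.exp (-t) * ‖z‖ ^ k ≤ ‖p.eval z‖) {c : ℝ} (hc : 0 < c)
    (hcK : ∀ w ∈ K, ‖z - w‖ ≤ c * ‖conj w * z - 1‖) :
    (p.roots.filter (· ∈ K)).card * Real.log c⁻¹ ≤ 2 * t := by
  set m := (p.roots.filter (· ∈ K)).card
  have hzk : 0 < ‖z‖ ^ k := pow_pos (one_pos.trans_le hz) k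
  have h : Real.exp (-t) * ‖z‖ ^ k ≤ (c ^ m * Real.exp t) * ‖z‖ ^ k := by
    linarith [hlow.trans (norm_eval_le_pow_card_roots_filter_mul hp hM hz hc.le hcK)]
  have h' : Real.exp (-t - t) ≤ c ^ m := by
    rw [Real.exp_sub, div_le_iff₀ (Real.exp_pos t)]
    exact le_of_mul_le_mul_right h hzk
  have := Real.log_le_log (Real.exp_pos _) h'
  rw [Real.log_exp, Real.log_pow] at this
  rw [Real.log_inv]
  linarith

end Polynomial

theorem eventually_forall_norm_eq_one_norm_eval_le_exp {p : ℕ → ℂ[X]} {k : ℕ → ℕ}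
    (hk : ∀ n, 1 ≤ k n)
    (ha : Filter.limsup (fun n : ℕ =>
        (((1 / (k n : ℝ)) * Real.log (sSup
          ((fun z : ℂ => ‖(p n).eval z‖) '' Metric.closedBall (0 : ℂ) 1))
          : ℝ) : EReal)) Filter.atTop ≤ 0) {η : ℝ} (hη : 0 < η) :
    ∀ᶠ n in atTop, ∀ u : ℂ, ‖u‖ = 1 → ‖(p n).eval u‖ ≤ Real.exp (k n * η) := by
  have hlt : ∀ᶠ n in atTop, (((1 / (k n : ℝ)) * Real.log (sSup
      ((fun z : ℂ => ‖(p n).eval z‖) '' Metric.closedBall (0 : ℂ) 1)) : ℝ) : EReal) < η :=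
    eventually_lt_of_limsup_lt (ha.trans_lt (by exact_mod_cast hη))
  filter_upwards [hlt] with n hn u hu
  have hkn : (0 : ℝ) < k n := by exact_mod_cast hk n
  have hbdd : BddAbove ((fun z : ℂ => ‖(p n).eval z‖) '' Metric.closedBall (0 : ℂ) 1) :=
    (isCompact_closedBall 0 1).bddAbove_image (p n).continuous.norm.continuousOn
  have hu' : ‖(p n).eval u‖ ≤ sSup ((fun z : ℂ => ‖(p n).eval z‖) '' Metric.closedBall (0 : ℂ) 1) :=
    le_csSup hbdd ⟨u, mem_closedBall_zero_iff.2 hu.le, rfl⟩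
  rw [EReal.coe_lt_coe_iff, one_div, inv_mul_lt_iff₀ hkn] at hn
  calc ‖(p n).eval u‖ ≤ _ := hu'
    _ ≤ _ := Real.le_exp_log _
    _ ≤ Real.exp (k n * η) := Real.exp_le_exp.2 hn.le

theorem eventually_exists_mem_exp_mul_pow_le_norm_eval {p : ℕ → ℂ[X]} {k : ℕ → ℕ}
    (hk : ∀ n, 1 ≤ k n) {S : Set ℂ}
    (hb : (1 : EReal) ≤ Filter.liminf (fun n : ℕ =>
        ((sSup ((fun z : ℂ =>
            ‖(p n).eval z‖ ^ ((k n : ℝ)⁻¹) / ‖z‖) '' S) : ℝ)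
          : EReal)) Filter.atTop) {η : ℝ} (hη : 0 < η) :
    ∀ᶠ n in atTop, ∃ z ∈ S, Real.exp (-(k n * η)) * ‖z‖ ^ k n ≤ ‖(p n).eval z‖ := by
  have hS : S.Nonempty := by
    rw [Set.nonempty_iff_ne_empty]
    rintro rfl
    exact not_le.2 zero_lt_one (by simpa using hb)
  have hlt : ∀ᶠ n in atTop, (Real.exp (-η) : EReal) < ((sSup ((fun z : ℂ =>
      ‖(p n).eval z‖ ^ ((k n : ℝ)⁻¹) / ‖z‖) '' S) : ℝ) : EReal) :=
    eventually_lt_of_lt_liminf ((show (Real.exp (-η) : EReal) < 1 by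
      exact_mod_cast Real.exp_lt_one_iff.2 (neg_neg_of_pos hη)).trans_le hb)
  filter_upwards [hlt] with n hn
  obtain ⟨_, ⟨z, hzS, rfl⟩, hz⟩ := exists_lt_of_lt_csSup (hS.image _) (EReal.coe_lt_coe_iff.1 hn)
  refine ⟨z, hzS, ?_⟩
  rcases eq_or_ne z 0 with rfl | hz0
  · simp [zero_pow (Nat.one_le_iff_ne_zero.1 (hk n))]
  rw [lt_div_iff₀ (norm_pos_iff.2 hz0)] at hz
  have hkn : (k n : ℝ) ≠ 0 := by exact_mod_cast (Nat.one_le_iff_ne_zero.1 (hk n))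
  calc Real.exp (-(k n * η)) * ‖z‖ ^ k n = (Real.exp (-η) * ‖z‖) ^ k n := by
        rw [mul_pow, ← Real.exp_nat_mul, mul_neg]
    _ ≤ (‖(p n).eval z‖ ^ ((k n : ℝ)⁻¹)) ^ k n := by gcongr
    _ = ‖(p n).eval z‖ := by
        rw [← Real.rpow_natCast, ← Real.rpow_mul (norm_nonneg _), inv_mul_cancel₀ hkn,
          Real.rpow_one]

/-- Corollary 2.5, part (i): a Jentzsch–Szegö type theorem for the unit
disc. If `(p_n)` is a sequence of complex polynomials, `k_n ≥ max(deg p_n, 1)`, the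
`limsup` of `(1/k_n) max_{|z|≤1} log |p_n(z)|` is `≤ 0`, and there is a compact subset
`S` of `{|z| > 1}` with `liminf_n max_{z ∈ S} |p_n(z)|^{1/k_n}/|z| ≥ 1`, then for every
compact `K ⊆ {|z| > 1}` the fraction `(1/k_n) · #{zeros of p_n in K}` tends to `0`. -/
theorem stmt_3 (p : ℕ → Polynomial ℂ) (k : ℕ → ℕ) (hk : ∀ n, 1 ≤ k n)
    (hdeg : ∀ n, (p n).natDegree ≤ k n)
    (ha : Filter.limsup (fun n : ℕ =>
        (((1 / (k n : ℝ)) * Real.log (sSup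
          ((fun z : ℂ => ‖(p n).eval z‖) '' Metric.closedBall (0 : ℂ) 1))
          : ℝ) : EReal)) Filter.atTop ≤ 0)
    (hb : ∃ S : Set ℂ, IsCompact S ∧ S ⊆ {z : ℂ | 1 < ‖z‖} ∧
      (1 : EReal) ≤ Filter.liminf (fun n : ℕ =>
        ((sSup ((fun z : ℂ =>
            ‖(p n).eval z‖ ^ ((k n : ℝ)⁻¹) / ‖z‖) '' S) : ℝ)
          : EReal)) Filter.atTop) :
    ∀ K : Set ℂ, IsCompact K → K ⊆ {z : ℂ | 1 < ‖z‖} →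
      Filter.Tendsto (fun n : ℕ =>
          (1 / (k n : ℝ)) * (((p n).roots.filter fun w => w ∈ K).card : ℝ))
        Filter.atTop (nhds 0) := by
  intro K hK hK1
  obtain ⟨S, hS, hS1, hliminf⟩ := hb
  obtain ⟨c, hc0, hc1, hcSK⟩ :=
    exists_forall_norm_sub_le_mul_norm_conj_mul_sub_one hS hK hS1 hK1
  have hL : 0 < Real.log c⁻¹ := Real.log_pos ((one_lt_inv₀ hc0).2 hc1)
  refine tendsto_order.2 ⟨fun b hb => Eventually.of_forall fun n => hb.trans_le (by positivity),
    fun δ hδ => ?_⟩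
  have hη : 0 < δ * Real.log c⁻¹ / 4 := by positivity
  filter_upwards [eventually_forall_norm_eq_one_norm_eval_le_exp hk ha hη,
    eventually_exists_mem_exp_mul_pow_le_norm_eval hk hliminf hη] with n hM ⟨z, hzS, hz⟩
  have hkn : (0 : ℝ) < k n := by exact_mod_cast hk n
  have hm := card_roots_filter_mul_log_inv_le (hdeg n) hM (hS1 hzS).le hz hc0 (hcSK z hzS)
  rw [one_div, inv_mul_lt_iff₀ hkn]
  nlinarith
end

section
/- Let f(z) = ∑_{k≥0} a_k z^k be a power series with null radius of convergence (limsup_{k→∞} |a_k|^{1/k} = ∞), with a_0 ≠ 0, such that every a_k is real and non-negative and a_{n−1}·a_{n+1} > a_n² for all n ≥ 1. Set α_n = a_n^{1/n} and q_n(z) = s_n(z/α_n) = ∑_{k=0}^n a_k α_n^{−k} z^k. Then the zero counting measures of (q_n) converge absolutely to the unit circle: for every ε > 0, (1/n)·#{ zeros w of q_n, counted with multiplicity, with | |w| − 1 | > ε } → 0 as n → ∞. -/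
/-!
The Turán inequalities make `k ↦ a k` log-convex, hence so are the coefficients
`a k * α_n⁻¹ ^ k` of `q_n`. These equal `a 0` at `k = 0` and `1` at `k = n`, so all of them lie
in `[0, max (a 0) 1]`, and Landau's inequality bounds the Mahler measure
`M(q_n) = ∏ max 1 ‖w‖` (the product over the roots; `q_n` is monic) by
`√(n+1) * max (a 0) 1`.
Each root of modulus `> 1 + ε` contributes a factor `1 + ε` to `M(q_n)`; since the roots
multiply to `± a 0`, each root of modulus `< 1 - δ` must be compensated by a factor `1 / (1 - δ)`
in `M(q_n)`. By Bernoulli's inequality both kinds of roots number `O(√n) = o(n)`.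
-/

open Filter Polynomial
open scoped Classical Real

section LogConvex

variable {c : ℕ → ℝ}

lemma pos_of_sq_lt_mul (hc : ∀ k, 0 ≤ c k) (h : ∀ k, c (k + 1) ^ 2 < c k * c (k + 2))
    (k : ℕ) : 0 < c k := by
  refine (hc k).lt_of_ne fun hk => ?_
  have := h k
  rw [← hk, zero_mul] at this
  exact (sq_nonneg _).not_gt this

lemma monotone_succ_div_of_sq_le_mul (hpos : ∀ k, 0 < c k)
    (h : ∀ k, c (k + 1) ^ 2 ≤ c k * c (k + 2)) : Monotone fun k => c (k + 1) / c k :=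
  monotone_nat_of_le_succ fun k => by
    rw [div_le_div_iff₀ (hpos k) (hpos (k + 1))]
    nlinarith [h k]

lemma le_max_endpoints_of_sq_le_mul (hpos : ∀ k, 0 < c k)
    (h : ∀ k, c (k + 1) ^ 2 ≤ c k * c (k + 2)) {k n : ℕ} (hkn : k ≤ n) :
    c k ≤ max (c 0) (c n) := by
  have hr := monotone_succ_div_of_sq_le_mul hpos h
  -- Either the ratios are `≥ 1` from `k` on, or they are `< 1` up to `k`.
  rcases le_or_gt 1 (c (k + 1) / c k) with hk | hk
  · refine le_max_of_le_right (Nat.le_induction le_rfl (fun m hkm ih => ?_) n hkn)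
    have : 1 ≤ c (m + 1) / c m := hk.trans (hr hkm)
    rw [one_le_div (hpos m)] at this
    exact ih.trans this
  · refine le_max_of_le_left ?_
    suffices ∀ m ≤ k, c m ≤ c 0 from this k le_rfl
    intro m
    induction m with
    | zero => exact fun _ => le_rfl
    | succ m ih =>
      intro hm
      have : c (m + 1) / c m < 1 := (hr (by omega)).trans_lt hk
      rw [div_lt_one (hpos m)] at this
      exact this.le.trans (ih (by omega))

lemma mul_pow_le_max_of_sq_le_mul (hpos : ∀ k, 0 < c k)
    (h : ∀ k, c (k + 1) ^ 2 ≤ c k * c (k + 2)) {t : ℝ} (ht : 0 < t) {k n : ℕ}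
    (hkn : k ≤ n) : c k * t ^ k ≤ max (c 0) (c n * t ^ n) := by
  simpa using le_max_endpoints_of_sq_le_mul (c := fun k => c k * t ^ k)
    (fun k => mul_pos (hpos k) (pow_pos ht k))
    (fun k => by
      have : 0 ≤ t ^ (2 * k + 2) := by positivity
      calc (c (k + 1) * t ^ (k + 1)) ^ 2 = c (k + 1) ^ 2 * t ^ (2 * k + 2) := by ring
        _ ≤ c k * c (k + 2) * t ^ (2 * k + 2) := by gcongr; exact h k
        _ = _ := by ring) hkn

end LogConvex

lemma Multiset.prod_map_ite_one {ι M : Type*} [CommMonoid M] (s : Multiset ι) (p : ι → Prop)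
    [DecidablePred p] (m : M) :
    (s.map fun i => if p i then m else 1).prod = m ^ Multiset.card (s.filter p) := by
  induction s using Multiset.induction_on with
  | empty => simp
  | cons i s ih => by_cases hi : p i <;> simp [hi, ih, pow_succ, mul_comm]

lemma one_sub_pow_mul_one_add_mul_le_one {δ : ℝ} (hδ0 : 0 ≤ δ) (hδ1 : δ ≤ 1) (N : ℕ) :
    (1 - δ) ^ N * (1 + N * δ) ≤ 1 :=
  calc (1 - δ) ^ N * (1 + N * δ) ≤ (1 - δ) ^ N * (1 + δ) ^ N :=
        mul_le_mul_of_nonneg_left (one_add_mul_le_pow (by linarith) N) (pow_nonneg (by linarith) N)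
    _ = (1 - δ ^ 2) ^ N := by rw [← mul_pow]; ring
    _ ≤ 1 := pow_le_one₀ (by nlinarith) (by nlinarith)

namespace Polynomial

variable {p : ℂ[X]}

lemma Monic.pow_card_roots_filter_lt_norm_le_mahlerMeasure (hp : p.Monic) {r : ℝ} (hr : 0 ≤ r) :
    r ^ Multiset.card (p.roots.filter fun w => r < ‖w‖) ≤ p.mahlerMeasure := by
  rw [← Multiset.prod_map_ite_one, mahlerMeasure_eq_leadingCoeff_mul_prod_roots, hp.leadingCoeff,
    norm_one, one_mul]
  refine Multiset.prod_map_le_prod_map₀ _ _ (fun w _ => by split_ifs <;> positivity)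
    fun w _ => ?_
  split_ifs with hw
  · exact hw.le.trans (le_max_right _ _)
  · exact le_max_left _ _

lemma Monic.norm_coeff_zero_le_pow_card_roots_filter_norm_lt_mul (hp : p.Monic) (r : ℝ) :
    ‖p.coeff 0‖ ≤
      r ^ Multiset.card (p.roots.filter fun w => ‖w‖ < r) * p.mahlerMeasure := by
  have hnorm : ‖p.roots.prod‖ = (p.roots.map norm).prod :=
    map_multiset_prod (normHom (α := ℂ)) _
  rw [(IsAlgClosed.splits p).coeff_zero_eq_prod_roots_of_monic hp, norm_mul, norm_pow, norm_neg,
    norm_one, one_pow, one_mul, hnorm, ← Multiset.prod_map_ite_one,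
    mahlerMeasure_eq_leadingCoeff_mul_prod_roots, hp.leadingCoeff, norm_one, one_mul,
    mul_comm, ← Multiset.prod_map_mul]
  refine Multiset.prod_map_le_prod_map₀ _ _ (fun w _ => norm_nonneg w) fun w _ => ?_
  split_ifs with hw
  · exact le_mul_of_one_le_left (by linarith [norm_nonneg w]) (le_max_left _ _) |>.trans' hw.le
  · rw [mul_one]; exact le_max_right _ _

lemma Monic.card_roots_filter_far_from_circle_le (hp : p.Monic) (h0 : p.coeff 0 ≠ 0) {ε : ℝ}
    (hε : 0 < ε) :
    (Multiset.card (p.roots.filter fun w => ε < |‖w‖ - 1|) : ℝ)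
      ≤ p.mahlerMeasure * (1 / ε + 1 / (‖p.coeff 0‖ * min ε 1)) := by
  set δ := min ε 1
  have hδ : 0 < δ := lt_min hε one_pos
  set Nout := Multiset.card (p.roots.filter fun w => 1 + ε < ‖w‖)
  set Nin := Multiset.card (p.roots.filter fun w => ‖w‖ < 1 - δ)
  have hcard : Multiset.card (p.roots.filter fun w => ε < |‖w‖ - 1|) ≤ Nout + Nin := by
    rw [← Multiset.card_add, Multiset.filter_add_filter, Multiset.card_add]
    refine le_add_right (Multiset.card_le_card (Multiset.monotone_filter_right _ fun w hw => ?_))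
    rcases lt_abs.1 hw with h | h
    · exact Or.inl (by linarith)
    · exact Or.inr (by linarith [min_le_left ε 1])
  have hout : Nout * ε ≤ p.mahlerMeasure := by
    have := hp.pow_card_roots_filter_lt_norm_le_mahlerMeasure (r := 1 + ε) (by linarith)
    nlinarith [one_add_mul_le_pow (a := ε) (by linarith) Nout]
  have hin : ‖p.coeff 0‖ * (Nin * δ) ≤ p.mahlerMeasure := by
    have h1 : ‖p.coeff 0‖ ≤ (1 - δ) ^ Nin * p.mahlerMeasure :=
      hp.norm_coeff_zero_le_pow_card_roots_filter_norm_lt_mul (1 - δ)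
    have h2 := one_sub_pow_mul_one_add_mul_le_one hδ.le (min_le_right ε 1) Nin
    have h3 : 0 ≤ 1 + Nin * δ := by positivity
    nlinarith [mul_le_mul_of_nonneg_right h1 h3,
      mul_le_mul_of_nonneg_right h2 p.mahlerMeasure_nonneg, norm_nonneg (p.coeff 0)]
  have hc0 : 0 < ‖p.coeff 0‖ := norm_pos_iff.2 h0
  calc (Multiset.card (p.roots.filter fun w => ε < |‖w‖ - 1|) : ℝ) ≤ Nout + Nin := by
        exact_mod_cast hcard
    _ ≤ p.mahlerMeasure / ε + p.mahlerMeasure / (‖p.coeff 0‖ * δ) := by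
        gcongr
        · rwa [le_div_iff₀ hε]
        · rw [le_div_iff₀ (by positivity)]; linarith
    _ = _ := by ring

end Polynomial

noncomputable def normalizedSection (a : ℕ → ℝ) (n : ℕ) : ℂ[X] :=
  ∑ k ∈ Finset.range (n + 1), C ((a k * (a n ^ (n : ℝ)⁻¹)⁻¹ ^ k : ℝ) : ℂ) * X ^ k

section NormalizedSection

variable {a : ℕ → ℝ} {n : ℕ}

lemma coeff_normalizedSection (a : ℕ → ℝ) (n k : ℕ) : (normalizedSection a n).coeff k =
    if k ≤ n then ((a k * (a n ^ (n : ℝ)⁻¹)⁻¹ ^ k : ℝ) : ℂ) else 0 := by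
  simp only [normalizedSection, finsetSum_coeff, coeff_C_mul_X_pow, Finset.sum_ite_eq,
    Finset.mem_range, Nat.lt_succ_iff]

lemma coeff_zero_normalizedSection (a : ℕ → ℝ) (n : ℕ) :
    (normalizedSection a n).coeff 0 = a 0 := by
  simp [coeff_normalizedSection]

lemma natDegree_normalizedSection_le (a : ℕ → ℝ) (n : ℕ) :
    (normalizedSection a n).natDegree ≤ n :=
  natDegree_le_iff_coeff_eq_zero.2 fun k hk => by simp [coeff_normalizedSection, not_le.2 hk]

lemma monic_normalizedSection (hn : n ≠ 0) (han : 0 < a n) : (normalizedSection a n).Monic := by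
  refine monic_of_natDegree_le_of_coeff_eq_one n (natDegree_normalizedSection_le a n) ?_
  rw [coeff_normalizedSection, if_pos le_rfl, inv_pow, Real.rpow_inv_natCast_pow han.le hn,
    mul_inv_cancel₀ han.ne', Complex.ofReal_one]

lemma supNorm_normalizedSection_le (hpos : ∀ k, 0 < a k)
    (hlc : ∀ k, a (k + 1) ^ 2 ≤ a k * a (k + 2)) (hn : n ≠ 0) :
    (normalizedSection a n).supNorm ≤ max (a 0) 1 := by
  obtain ⟨k, hk⟩ := (normalizedSection a n).exists_eq_supNorm
  have ht : 0 < (a n ^ (n : ℝ)⁻¹)⁻¹ := by have := hpos n; positivity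
  rw [hk, coeff_normalizedSection]
  split_ifs with hkn
  · rw [Complex.norm_real, Real.norm_eq_abs, abs_of_pos (mul_pos (hpos k) (pow_pos ht k))]
    have := mul_pow_le_max_of_sq_le_mul hpos hlc ht hkn
    rwa [inv_pow _ n, Real.rpow_inv_natCast_pow (hpos n).le hn,
      mul_inv_cancel₀ (hpos n).ne'] at this
  · simp

lemma mahlerMeasure_normalizedSection_le (hpos : ∀ k, 0 < a k)
    (hlc : ∀ k, a (k + 1) ^ 2 ≤ a k * a (k + 2)) (hn : n ≠ 0) :
    (normalizedSection a n).mahlerMeasure ≤ √(n + 1) * max (a 0) 1 := by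
  refine (mahlerMeasure_le_sqrt_natDegree_add_one_mul_supNorm _).trans ?_
  gcongr
  · exact supNorm_nonneg _
  · exact_mod_cast natDegree_normalizedSection_le a n
  · exact supNorm_normalizedSection_le hpos hlc hn

lemma card_roots_normalizedSection_filter_far_from_circle_le (hpos : ∀ k, 0 < a k)
    (hlc : ∀ k, a (k + 1) ^ 2 ≤ a k * a (k + 2)) (hn : n ≠ 0) {ε : ℝ} (hε : 0 < ε) :
    (Multiset.card ((normalizedSection a n).roots.filter fun w => ε < |‖w‖ - 1|) : ℝ)
      ≤ √(n + 1) * (max (a 0) 1 * (1 / ε + 1 / (a 0 * min ε 1))) := by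
  have h0 : (normalizedSection a n).coeff 0 ≠ 0 := by
    rw [coeff_zero_normalizedSection]; exact_mod_cast (hpos 0).ne'
  refine ((monic_normalizedSection hn (hpos n)).card_roots_filter_far_from_circle_le h0
    hε).trans ?_
  rw [coeff_zero_normalizedSection, Complex.norm_real, Real.norm_of_nonneg (hpos 0).le,
    ← mul_assoc]
  have hδ : 0 < min ε 1 := lt_min hε one_pos
  have ha0 := hpos 0
  gcongr
  exact mahlerMeasure_normalizedSection_le hpos hlc hn

end NormalizedSection

lemma tendsto_one_div_mul_sqrt_add_one :
    Tendsto (fun n : ℕ => 1 / (n : ℝ) * √(n + 1)) atTop (nhds 0) := by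
  have hinv := tendsto_inv_atTop_zero.comp (tendsto_natCast_atTop_atTop (R := ℝ))
  have h : Tendsto (fun n : ℕ => √((n : ℝ)⁻¹ + ((n : ℝ)⁻¹) ^ 2)) atTop (nhds 0) := by
    simpa using (hinv.add (hinv.pow 2)).sqrt
  refine h.congr fun n => ?_
  rcases n.eq_zero_or_pos with rfl | hn
  · simp
  · have hn' : (0 : ℝ) < n := by exact_mod_cast hn
    rw [show (n : ℝ)⁻¹ + (n : ℝ)⁻¹ ^ 2 = (n + 1) / n ^ 2 by field_simp,
      Real.sqrt_div' _ (sq_nonneg _), Real.sqrt_sq hn'.le, one_div_mul_eq_div]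

theorem stmt_9_general (a : ℕ → ℝ) (α : ℕ → ℝ) (Q : ℕ → Polynomial ℂ)
    (hnonneg : ∀ k, 0 ≤ a k)
    (hturan : ∀ n : ℕ, 1 ≤ n → a n ^ 2 < a (n - 1) * a (n + 1))
    (hα : ∀ n : ℕ, α n = a n ^ ((n : ℝ)⁻¹))
    (hQ : ∀ n : ℕ, Q n = ∑ k ∈ Finset.range (n + 1),
      Polynomial.C ((a k : ℂ) * ((α n : ℂ))⁻¹ ^ k) * Polynomial.X ^ k) :
    ∀ ε : ℝ, 0 < ε →
      Filter.Tendsto (fun n : ℕ => (1 / (n : ℝ)) *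
          (((Q n).roots.filter fun w => ε < |‖w‖ - 1|).card : ℝ))
        Filter.atTop (nhds 0) := by
  intro ε hε
  have hturan' : ∀ k, a (k + 1) ^ 2 < a k * a (k + 2) := fun k => by
    simpa using hturan (k + 1) le_add_self
  have hpos := pos_of_sq_lt_mul hnonneg hturan'
  have hQ' : ∀ n, Q n = normalizedSection a n := fun n => by
    simp [hQ, hα, normalizedSection]
  set C := max (a 0) 1 * (1 / ε + 1 / (a 0 * min ε 1))
  refine squeeze_zero' (Eventually.of_forall fun n => by positivity) ?_
    (by simpa only [zero_mul] using tendsto_one_div_mul_sqrt_add_one.mul_const C)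
  filter_upwards [eventually_ne_atTop 0] with n hn
  rw [hQ', mul_assoc]
  exact mul_le_mul_of_nonneg_left (card_roots_normalizedSection_filter_far_from_circle_le hpos
    (fun k => (hturan' k).le) hn hε) (by positivity)

/-- Dilcher–Rubel, Theorem 3.3. Let `∑ a_k z^k` be a power series with
null radius of convergence, real non-negative coefficients, `a_0 ≠ 0`, and
`a_{n-1} a_{n+1} > a_n²` for all `n ≥ 1`. With `α_n = a_n^{1/n}` and the normalized
sections `q_n(z) = ∑_{k=0}^n a_k α_n^{-k} z^k`, the zero counting measures of `(q_n)`
converge absolutely to the unit circle: for every `ε > 0` the fraction of zeros `w` of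
`q_n` with `||w| - 1| > ε` tends to `0`. -/
theorem stmt_9 (a : ℕ → ℝ) (α : ℕ → ℝ) (Q : ℕ → Polynomial ℂ)
    (hnonneg : ∀ k, 0 ≤ a k)
    (ha0 : a 0 ≠ 0)
    (hturan : ∀ n : ℕ, 1 ≤ n → a n ^ 2 < a (n - 1) * a (n + 1))
    (hrad : Filter.limsup
      (fun k : ℕ => ((|a k| ^ ((k : ℝ)⁻¹) : ℝ) : EReal)) Filter.atTop = ⊤)
    (hα : ∀ n : ℕ, α n = a n ^ ((n : ℝ)⁻¹))
    (hQ : ∀ n : ℕ, Q n = ∑ k ∈ Finset.range (n + 1),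
      Polynomial.C ((a k : ℂ) * ((α n : ℂ))⁻¹ ^ k) * Polynomial.X ^ k) :
    ∀ ε : ℝ, 0 < ε →
      Filter.Tendsto (fun n : ℕ => (1 / (n : ℝ)) *
          (((Q n).roots.filter fun w => ε < |‖w‖ - 1|).card : ℝ))
        Filter.atTop (nhds 0) :=
  stmt_9_general a α Q hnonneg hturan hα hQ
end

section
/- Let f(z) = ∑_{k≥0} a_k z^k be a power series with null radius of convergence (limsup_{k→∞} |a_k|^{1/k} = ∞) and a_0 ≠ 0. Let (k_n)_{n∈ℕ} be the (infinite) increasing sequence of indices at which α_{k_n} = A_{k_n}, where α_m = |a_m|^{1/m} and A_m = max_{1≤j≤m} α_j. Then for every ε > 0 there exists N such that for all n ≥ N, every zero w of the polynomial z ↦ s_{k_n}(z/α_{k_n}) satisfies |a_0|/(1+|a_0|) ≤ |w| ≤ 2 + ε. -/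
/-!
After the substitution `z ↦ z / α_m` with `m = k_n`, the maximality `α_j ≤ α_m` for `j ≤ m`
gives a polynomial whose coefficients of degree `1, …, m` have modulus at most one, the leading
one exactly one, and whose constant term is still `a_0`. At a zero `w`, comparing the constant
term with the others gives `|a_0| ≤ |w| / (1 - |w|)` when `|w| < 1`, and comparing the leading
term with the others gives `|w|^m (|w| - 2) ≤ |a_0| (|w| - 1)` when `|w| > 1`. The latter is
incompatible with `|w| > 2 + ε` as soon as `2^m ε > |a_0| (1 + ε)`, which holds for large `n`
since `k_n ≥ n`.
-/

open Finset Polynomial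

section BoundedCoefficients

variable {𝕜 : Type*} [NormedField 𝕜] {b : ℕ → 𝕜} {m : ℕ} {w : 𝕜}

theorem norm_coeff_zero_le_of_sum_eq_zero (hw : ∑ j ∈ range (m + 1), b j * w ^ j = 0) :
    ‖b 0‖ ≤ ∑ j ∈ Ico 1 (m + 1), ‖b j‖ * ‖w‖ ^ j := by
  rw [range_eq_Ico, sum_eq_sum_Ico_succ_bot m.succ_pos, pow_zero, mul_one] at hw
  calc ‖b 0‖ = ‖∑ j ∈ Ico 1 (m + 1), b j * w ^ j‖ := by
        rw [eq_neg_of_add_eq_zero_left hw, norm_neg]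
    _ ≤ ∑ j ∈ Ico 1 (m + 1), ‖b j * w ^ j‖ := norm_sum_le _ _
    _ = ∑ j ∈ Ico 1 (m + 1), ‖b j‖ * ‖w‖ ^ j := by simp only [norm_mul, norm_pow]

theorem norm_pow_le_of_sum_eq_zero (hw : ∑ j ∈ range (m + 1), b j * w ^ j = 0)
    (hbm : ‖b m‖ = 1) : ‖w‖ ^ m ≤ ∑ j ∈ range m, ‖b j‖ * ‖w‖ ^ j := by
  rw [sum_range_succ] at hw
  calc ‖w‖ ^ m = ‖b m * w ^ m‖ := by rw [norm_mul, hbm, one_mul, norm_pow]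
    _ = ‖∑ j ∈ range m, b j * w ^ j‖ := by
        rw [eq_neg_of_add_eq_zero_right hw, norm_neg]
    _ ≤ ∑ j ∈ range m, ‖b j * w ^ j‖ := norm_sum_le _ _
    _ = ∑ j ∈ range m, ‖b j‖ * ‖w‖ ^ j := by simp only [norm_mul, norm_pow]

theorem div_one_add_norm_le_norm_of_sum_eq_zero (hw : ∑ j ∈ range (m + 1), b j * w ^ j = 0)
    (hb : ∀ j ∈ Ico 1 (m + 1), ‖b j‖ ≤ 1) : ‖b 0‖ / (1 + ‖b 0‖) ≤ ‖w‖ := by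
  by_contra! hlt
  have hc := norm_nonneg (b 0)
  have hW := norm_nonneg w
  have hW1 : ‖w‖ < 1 := hlt.trans ((div_lt_one (by positivity)).2 (by linarith))
  have hgeom : ‖b 0‖ ≤ ‖w‖ / (1 - ‖w‖) :=
    calc ‖b 0‖ ≤ ∑ j ∈ Ico 1 (m + 1), ‖b j‖ * ‖w‖ ^ j := norm_coeff_zero_le_of_sum_eq_zero hw
      _ ≤ ∑ j ∈ Ico 1 (m + 1), ‖w‖ ^ j :=
          sum_le_sum fun j hj => mul_le_of_le_one_left (by positivity) (hb j hj)
      _ ≤ ‖w‖ ^ 1 / (1 - ‖w‖) := geom_sum_Ico_le_of_lt_one hW hW1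
      _ = ‖w‖ / (1 - ‖w‖) := by rw [pow_one]
  rw [lt_div_iff₀ (by positivity)] at hlt
  rw [le_div_iff₀ (by linarith)] at hgeom
  linarith

theorem norm_pow_mul_sub_two_le_of_sum_eq_zero (hw : ∑ j ∈ range (m + 1), b j * w ^ j = 0)
    (hb : ∀ j ∈ Ico 1 m, ‖b j‖ ≤ 1) (hbm : ‖b m‖ = 1) (hW : 1 < ‖w‖) :
    ‖w‖ ^ m * (‖w‖ - 2) ≤ ‖b 0‖ * (‖w‖ - 1) := by
  rcases Nat.eq_zero_or_pos m with rfl | hm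
  · simp_all
  have hkey : ‖w‖ ^ m ≤ ‖b 0‖ + (‖w‖ ^ m - ‖w‖) / (‖w‖ - 1) :=
    calc ‖w‖ ^ m ≤ ∑ j ∈ range m, ‖b j‖ * ‖w‖ ^ j := norm_pow_le_of_sum_eq_zero hw hbm
      _ = ‖b 0‖ + ∑ j ∈ Ico 1 m, ‖b j‖ * ‖w‖ ^ j := by
          rw [range_eq_Ico, sum_eq_sum_Ico_succ_bot hm, pow_zero, mul_one]
      _ ≤ ‖b 0‖ + ∑ j ∈ Ico 1 m, ‖w‖ ^ j := by
          gcongr with j hj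
          exact mul_le_of_le_one_left (by positivity) (hb j hj)
      _ = ‖b 0‖ + (‖w‖ ^ m - ‖w‖) / (‖w‖ - 1) := by rw [geom_sum_Ico hW.ne' hm, pow_one]
  rw [← sub_le_iff_le_add', le_div_iff₀ (by linarith)] at hkey
  linarith

theorem norm_le_two_add_of_sum_eq_zero (hw : ∑ j ∈ range (m + 1), b j * w ^ j = 0)
    (hb : ∀ j ∈ Ico 1 m, ‖b j‖ ≤ 1) (hbm : ‖b m‖ = 1) {ε : ℝ} (hε : 0 < ε)
    (hm : ‖b 0‖ * (1 + ε) < 2 ^ m * ε) : ‖w‖ ≤ 2 + ε := by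
  by_contra! hgt
  have hcauchy := norm_pow_mul_sub_two_le_of_sum_eq_zero hw hb hbm (by linarith)
  have h2m : (2 : ℝ) ^ m ≤ ‖w‖ ^ m := pow_le_pow_left₀ zero_le_two (by linarith) m
  have hc : ‖b 0‖ < ‖w‖ ^ m := by nlinarith [norm_nonneg (b 0)]
  -- `hcauchy` says `(|w|^m - |a_0|)(|w| - 2) ≤ |a_0|`, and `|w| - 2 > ε`
  nlinarith [mul_lt_mul_of_pos_left (show ε < ‖w‖ - 2 by linarith) (sub_pos.2 hc)]

end BoundedCoefficients

section Rescaling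

variable {x : ℂ} {j : ℕ} {r : ℝ}

theorem norm_mul_inv_ofReal_pow (hr : 0 < r) : ‖x * (r : ℂ)⁻¹ ^ j‖ = ‖x‖ / r ^ j := by
  simp [abs_of_pos hr, div_eq_mul_inv]

theorem norm_mul_inv_ofReal_pow_le_one (hj : j ≠ 0) (hr : 0 < r)
    (h : ‖x‖ ^ ((j : ℝ)⁻¹) ≤ r) : ‖x * (r : ℂ)⁻¹ ^ j‖ ≤ 1 := by
  rw [norm_mul_inv_ofReal_pow hr, div_le_one (by positivity),
    ← Real.rpow_inv_natCast_pow (norm_nonneg x) hj]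
  exact pow_le_pow_left₀ (by positivity) h j

theorem norm_mul_inv_ofReal_pow_eq_one (hj : j ≠ 0) (hr : 0 < r)
    (h : r = ‖x‖ ^ ((j : ℝ)⁻¹)) : ‖x * (r : ℂ)⁻¹ ^ j‖ = 1 := by
  rw [norm_mul_inv_ofReal_pow hr, h, Real.rpow_inv_natCast_pow (norm_nonneg x) hj,
    div_self (norm_ne_zero_iff.2 fun hx => by simp [hx, h, hj] at hr)]

end Rescaling

theorem stmt_10_general (a : ℕ → ℂ) (α : ℕ → ℝ) (k : ℕ → ℕ) (Q : ℕ → Polynomial ℂ)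
    (ha0 : a 0 ≠ 0)
    (hα : ∀ m : ℕ, α m = ‖a m‖ ^ ((m : ℝ)⁻¹))
    (hkmono : StrictMono k)
    (hkpos : ∀ n, 1 ≤ k n)
    (hkmax : ∀ n : ℕ, IsGreatest
      {x : ℝ | ∃ j : ℕ, 1 ≤ j ∧ j ≤ k n ∧ x = α j} (α (k n)))
    (hQ : ∀ m : ℕ, Q m = ∑ j ∈ Finset.range (m + 1),
      Polynomial.C (a j * ((α m : ℂ))⁻¹ ^ j) * Polynomial.X ^ j) :
    ∀ ε : ℝ, 0 < ε → ∃ N : ℕ, ∀ n : ℕ, N ≤ n →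
      ∀ w ∈ (Q (k n)).roots,
        ‖a 0‖ / (1 + ‖a 0‖) ≤ ‖w‖ ∧
        ‖w‖ ≤ 2 + ε := by
  intro ε hε
  obtain ⟨N, hN⟩ := pow_unbounded_of_one_lt (‖a 0‖ * (1 + ε) / ε) one_lt_two
  refine ⟨N, fun n hn w hw => ?_⟩
  set m := k n
  have hroot : ∑ j ∈ range (m + 1), a j * ((α m : ℂ))⁻¹ ^ j * w ^ j = 0 := by
    simpa [hQ, eval_finsetSum] using (mem_roots'.1 hw).2
  have hαnn : ∀ j, 0 ≤ α j := fun j => (hα j).symm ▸ Real.rpow_nonneg (norm_nonneg _) _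
  have hαpos : 0 < α m := (hαnn m).lt_of_ne' fun h0 => ha0 <| by
    simpa [h0, sum_range_succ'] using hroot
  have hcoef : ∀ j ∈ Ico 1 (m + 1), ‖a j * ((α m : ℂ))⁻¹ ^ j‖ ≤ 1 := fun j hj => by
    rw [mem_Ico] at hj
    exact norm_mul_inv_ofReal_pow_le_one (by omega) hαpos
      ((hα j).symm.trans_le ((hkmax n).2 ⟨j, hj.1, by omega, rfl⟩))
  have hlead : ‖a m * ((α m : ℂ))⁻¹ ^ m‖ = 1 :=
    norm_mul_inv_ofReal_pow_eq_one (Nat.one_le_iff_ne_zero.1 (hkpos n)) hαpos (hα m)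
  have hlarge : ‖a 0‖ * (1 + ε) < 2 ^ m * ε := by
    rw [← div_lt_iff₀ hε]
    exact hN.trans_le (pow_le_pow_right₀ one_le_two (hn.trans hkmono.le_apply))
  constructor
  · simpa using div_one_add_norm_le_norm_of_sum_eq_zero
      (b := fun j => a j * ((α m : ℂ))⁻¹ ^ j) hroot hcoef
  · exact norm_le_two_add_of_sum_eq_zero (b := fun j => a j * ((α m : ℂ))⁻¹ ^ j) hroot
      (fun j hj => hcoef j (Ico_subset_Ico_right m.le_succ hj)) hlead hε (by simpa using hlarge)

/-- Dilcher–Rubel, localization of the zeros of the dominantly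
normalized sections. Let `∑ a_k z^k` have null radius of convergence, `a_0 ≠ 0`,
`α_m = |a_m|^{1/m}`, `A_m = max_{1 ≤ j ≤ m} α_j`, and let `(k_n)` be the increasing
sequence of all indices at which `α_{k_n} = A_{k_n}`. Then for every `ε > 0` and all
large `n`, every zero `w` of `s_{k_n}(z/α_{k_n})` satisfies
`|a_0|/(1+|a_0|) ≤ |w| ≤ 2 + ε`. -/
theorem stmt_10 (a : ℕ → ℂ) (α : ℕ → ℝ) (k : ℕ → ℕ) (Q : ℕ → Polynomial ℂ)
    (ha0 : a 0 ≠ 0)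
    (hα : ∀ m : ℕ, α m = ‖a m‖ ^ ((m : ℝ)⁻¹))
    (hrad : Filter.limsup (fun m : ℕ => ((α m : ℝ) : EReal)) Filter.atTop = ⊤)
    (hkmono : StrictMono k)
    (hkpos : ∀ n, 1 ≤ k n)
    (hkmax : ∀ n : ℕ, IsGreatest
      {x : ℝ | ∃ j : ℕ, 1 ≤ j ∧ j ≤ k n ∧ x = α j} (α (k n)))
    (hkall : ∀ m : ℕ, 1 ≤ m →
      IsGreatest {x : ℝ | ∃ j : ℕ, 1 ≤ j ∧ j ≤ m ∧ x = α j} (α m) → ∃ n, k n = m)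
    (hQ : ∀ m : ℕ, Q m = ∑ j ∈ Finset.range (m + 1),
      Polynomial.C (a j * ((α m : ℂ))⁻¹ ^ j) * Polynomial.X ^ j) :
    ∀ ε : ℝ, 0 < ε → ∃ N : ℕ, ∀ n : ℕ, N ≤ n →
      ∀ w ∈ (Q (k n)).roots,
        ‖a 0‖ / (1 + ‖a 0‖) ≤ ‖w‖ ∧
        ‖w‖ ≤ 2 + ε :=
  stmt_10_general a α k Q ha0 hα hkmono hkpos hkmax hQ
end

section
/- Let (a_k)_{k≥0} be a sequence of strictly positive real numbers such that a_{n−1}·a_{n+1} > a_n² for all n ≥ 1 and limsup_{k→∞} a_k^{1/k} = ∞. Then the gauge of (a_k) equals 1; equivalently, for every γ ∈ (0,1), liminf_{n→∞} ( max_{(1-γ)n ≤ k ≤ n} a_k^{1/k} ) / ( max_{1 ≤ k ≤ n} a_k^{1/k} ) = 1. -/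
open Filter Polynomial
open scoped Classical Real Topology

/-- If `(a_k)` is a sequence of strictly positive reals with
`a_{n-1} a_{n+1} > a_n²` for all `n ≥ 1` and `limsup a_k^{1/k} = ∞`, then the gauge of
`(a_k)` equals `1`: for every `γ ∈ (0,1)`,
`liminf_n (max_{(1-γ)n ≤ k ≤ n} a_k^{1/k}) / (max_{1 ≤ k ≤ n} a_k^{1/k}) = 1`. -/
theorem stmt_14 (a : ℕ → ℝ) (A : ℕ → ℝ) (B : ℝ → ℕ → ℝ)
    (hpos : ∀ k, 0 < a k)
    (hturan : ∀ n : ℕ, 1 ≤ n → a n ^ 2 < a (n - 1) * a (n + 1))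
    (hrad : Filter.limsup
      (fun k : ℕ => ((a k ^ ((k : ℝ)⁻¹) : ℝ) : EReal)) Filter.atTop = ⊤)
    (hA : ∀ n : ℕ, 1 ≤ n → IsGreatest
      {x : ℝ | ∃ k : ℕ, 1 ≤ k ∧ k ≤ n ∧ x = a k ^ ((k : ℝ)⁻¹)} (A n))
    (hB : ∀ γ ∈ Set.Ioo (0 : ℝ) 1, ∀ n : ℕ, 1 ≤ n → IsGreatest
      {x : ℝ | ∃ k : ℕ, (1 - γ) * (n : ℝ) ≤ (k : ℝ) ∧ k ≤ n ∧
        x = a k ^ ((k : ℝ)⁻¹)} (B γ n)) :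
    ∀ γ ∈ Set.Ioo (0 : ℝ) 1,
      Filter.liminf (fun n : ℕ => ((B γ n / A n : ℝ) : EReal)) Filter.atTop = 1 := by
  intro γ hγ
  obtain ⟨hγ0, hγ1⟩ := hγ
  have hα : ∀ k : ℕ, a k ^ ((k:ℝ)⁻¹) = Real.exp (Real.log (a k) / k) := by
    intro k
    rw [Real.rpow_def_of_pos (hpos k)]
    ring_nf
  set d : ℕ → ℝ := fun k => Real.log (a (k+1)) - Real.log (a k) with hdd
  -- d is strictly monotone
  have hdm : StrictMono d := by
    apply strictMono_nat_of_lt_succ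
    intro k
    have h := hturan (k+1) (by omega)
    simp only [Nat.add_sub_cancel] at h
    have h1 : Real.log (a (k+1) ^ 2) < Real.log (a k * a (k+1+1)) :=
      Real.log_lt_log (pow_pos (hpos _) 2) h
    rw [Real.log_pow, Real.log_mul (hpos k).ne' (hpos (k+1+1)).ne'] at h1
    simp only [hdd]
    push_cast at h1
    linarith
  have hstep : ∀ k, Real.log (a (k+1)) = Real.log (a k) + d k := by
    intro k; simp [hdd]
  -- summation lower bound
  have hsum : ∀ k m : ℕ, Real.log (a k) + (m:ℝ) * d k ≤ Real.log (a (k + m)) := by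
    intro k m
    induction m with
    | zero => simp
    | succ m ih =>
      have h1 := hstep (k+m)
      have h2 : d k ≤ d (k+m) := hdm.monotone (by omega)
      have h3 : k + (m+1) = (k+m) + 1 := by omega
      rw [h3, h1]
      push_cast
      linarith
  -- d tends to infinity
  have hdtop : Tendsto d atTop atTop := by
    rcases tendsto_of_monotone hdm.monotone with h | ⟨L, hL⟩
    · exact h
    · exfalso
      have hdle : ∀ k, d k ≤ L := fun k => hdm.monotone.ge_of_tendsto hL k
      have hbb : ∀ k : ℕ, Real.log (a k) ≤ Real.log (a 0) + (k:ℝ) * L := by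
        intro k
        induction k with
        | zero => simp
        | succ k ih =>
          have h1 := hstep k
          have h2 := hdle k
          push_cast
          linarith
      set C : ℝ := Real.exp (|Real.log (a 0)| + |L| + 1) with hC
      have hbound : ∀ k, a k ^ ((k:ℝ)⁻¹) ≤ max 1 C := by
        intro k
        rcases Nat.eq_zero_or_pos k with rfl | hk
        · simp
        · rw [hα]
          have hk0 : (0:ℝ) < k := by exact_mod_cast hk
          have hk1 : (1:ℝ) ≤ k := by exact_mod_cast hk
          have h1 : Real.log (a k) / k ≤ (Real.log (a 0) + (k:ℝ) * L) / k :=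
            (div_le_div_iff_of_pos_right hk0).mpr (hbb k)
          have h2 : (Real.log (a 0) + (k:ℝ) * L) / k ≤ |Real.log (a 0)| + |L| + 1 := by
            rw [div_le_iff₀ hk0]
            nlinarith [le_abs_self (Real.log (a 0)), le_abs_self L,
              abs_nonneg (Real.log (a 0)), abs_nonneg L]
          calc Real.exp (Real.log (a k) / k) ≤ C := by
                rw [hC]; exact Real.exp_le_exp.mpr (le_trans h1 h2)
            _ ≤ max 1 C := le_max_right _ _
      have hls : Filter.limsup (fun k : ℕ => ((a k ^ ((k:ℝ)⁻¹) : ℝ) : EReal)) atTop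
          ≤ ((max 1 C : ℝ) : EReal) := by
        apply Filter.limsup_le_of_le
        · isBoundedDefault
        · exact Filter.Eventually.of_forall fun k => EReal.coe_le_coe_iff.mpr (hbound k)
      rw [hrad] at hls
      exact (EReal.coe_lt_top (max 1 C)).not_ge hls
  -- bound: log a (m+1) ≤ log a 0 + d 0 + m * d m
  have hkd : ∀ m : ℕ, Real.log (a (m+1)) ≤ Real.log (a 0) + d 0 + (m:ℝ) * d m := by
    intro m
    induction m with
    | zero => simp [hstep 0]
    | succ m ih =>
      have h1 := hstep (m+1)
      have h2 : d m ≤ d (m+1) := hdm.monotone (by omega)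
      have hm0 : (0:ℝ) ≤ (m:ℝ) := by positivity
      push_cast
      nlinarith
  -- choose K
  obtain ⟨K0, hK0⟩ := Filter.eventually_atTop.mp
    (hdtop.eventually_ge_atTop (Real.log (a 0) + d 0))
  set K : ℕ := K0 + 1 with hKdef
  have hkdk : ∀ k, K ≤ k → Real.log (a k) ≤ (k:ℝ) * d k := by
    intro k hk
    obtain ⟨m, rfl⟩ : ∃ m, k = m + 1 := ⟨k - 1, by omega⟩
    have h1 := hkd m
    have h2 : d m ≤ d (m+1) := hdm.monotone (by omega)
    have h3 : Real.log (a 0) + d 0 ≤ d (m+1) := hK0 (m+1) (by omega)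
    have hm0 : (0:ℝ) ≤ (m:ℝ) := by positivity
    push_cast
    nlinarith
  -- monotonicity of log a k / k for k ≥ K
  have hmono : ∀ k n : ℕ, K ≤ k → k ≤ n →
      Real.log (a k) / k ≤ Real.log (a n) / n := by
    intro k n hk hkn
    have hk0 : (0:ℝ) < k := by
      have : 1 ≤ k := by omega
      exact_mod_cast this
    have hn0 : (0:ℝ) < n := by
      have : 1 ≤ n := by omega
      exact_mod_cast Nat.lt_of_lt_of_le Nat.zero_lt_one this
    obtain ⟨m, rfl⟩ : ∃ m, n = k + m := ⟨n - k, by omega⟩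
    have h1 := hsum k m
    have h2 := hkdk k hk
    rw [div_le_div_iff₀ hk0 hn0]
    have hm0 : (0:ℝ) ≤ (m:ℝ) := by positivity
    push_cast
    nlinarith [mul_le_mul_of_nonneg_right h1 (le_of_lt hk0),
      mul_le_mul_of_nonneg_left h2 hm0]
  -- log a n / n tends to infinity
  have htop : Tendsto (fun n : ℕ => Real.log (a n) / n) atTop atTop := by
    rw [tendsto_atTop]
    intro C
    obtain ⟨m, hm⟩ := (hdtop.eventually_ge_atTop (C+1)).exists
    have hc : Tendsto (fun n : ℕ => (Real.log (a m) - (m:ℝ) * (C+1)) / n) atTop (𝓝 0) :=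
      tendsto_const_div_atTop_nhds_zero_nat _
    have hev : ∀ᶠ n : ℕ in atTop, -1 < (Real.log (a m) - (m:ℝ) * (C+1)) / n :=
      hc.eventually (eventually_gt_nhds (by norm_num : (-1:ℝ) < 0))
    filter_upwards [hev, eventually_ge_atTop (m+1)] with n h1 h2
    have hn0 : (0:ℝ) < n := by
      have : 1 ≤ n := by omega
      exact_mod_cast Nat.lt_of_lt_of_le Nat.zero_lt_one this
    obtain ⟨p, rfl⟩ : ∃ p, n = m + p := ⟨n - m, by omega⟩
    have h3 := hsum m p
    have h4 : (C+1:ℝ) ≤ d m := hm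
    have hp0 : (0:ℝ) ≤ (p:ℝ) := by positivity
    have h5 : Real.log (a m) + (p:ℝ) * (C+1) ≤ Real.log (a (m+p)) := by
      nlinarith
    have h6 : (-1:ℝ) * ((m:ℝ)+(p:ℝ)) < Real.log (a m) - (m:ℝ) * (C+1) := by
      have := (lt_div_iff₀ hn0).mp h1
      push_cast at this
      linarith
    rw [le_div_iff₀ hn0]
    push_cast
    nlinarith
  -- the maximum over [1, K] of log a k / k
  have hKne : (Finset.Icc 1 K).Nonempty := ⟨K, by simp [hKdef]⟩
  set M : ℝ := (Finset.Icc 1 K).sup' hKne (fun k => Real.log (a k) / k) with hM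
  -- main eventual equality
  have key : ∀ᶠ n : ℕ in atTop, (B γ n / A n : ℝ) = 1 := by
    filter_upwards [htop.eventually_ge_atTop M, eventually_ge_atTop K] with n hMn hKn
    have hn1 : 1 ≤ n := le_trans (by omega) hKn
    have hmax : ∀ k, 1 ≤ k → k ≤ n → a k ^ ((k:ℝ)⁻¹) ≤ a n ^ ((n:ℝ)⁻¹) := by
      intro k hk1 hkn
      rw [hα, hα, Real.exp_le_exp]
      rcases le_or_gt K k with h | h
      · exact hmono k n h hkn
      · exact le_trans
          (Finset.le_sup' (fun k => Real.log (a k) / k)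
            (Finset.mem_Icc.mpr ⟨hk1, by omega⟩)) hMn
    have hAn : A n = a n ^ ((n:ℝ)⁻¹) := by
      obtain ⟨⟨k, hk1, hkn, hEq⟩, hub⟩ := hA n hn1
      have h1 : A n ≤ a n ^ ((n:ℝ)⁻¹) := hEq ▸ hmax k hk1 hkn
      have h2 : a n ^ ((n:ℝ)⁻¹) ≤ A n := hub ⟨n, hn1, le_refl n, rfl⟩
      linarith
    have hBn : B γ n = a n ^ ((n:ℝ)⁻¹) := by
      obtain ⟨⟨k, hk1, hkn, hEq⟩, hub⟩ := hB γ ⟨hγ0, hγ1⟩ n hn1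
      have hn0 : (0:ℝ) < n := by exact_mod_cast Nat.lt_of_lt_of_le Nat.zero_lt_one hn1
      have hk1' : 1 ≤ k := by
        by_contra h
        have hk0 : k = 0 := by omega
        subst hk0
        have hp : (0:ℝ) < (1-γ) * n := mul_pos (by linarith) hn0
        simp only [Nat.cast_zero] at hk1
        linarith
      have h1 : B γ n ≤ a n ^ ((n:ℝ)⁻¹) := hEq ▸ hmax k hk1' hkn
      have h2 : a n ^ ((n:ℝ)⁻¹) ≤ B γ n := by
        apply hub
        refine ⟨n, ?_, le_refl n, rfl⟩
        nlinarith
      linarith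
    rw [hAn, hBn, div_self (ne_of_gt (Real.rpow_pos_of_pos (hpos n) _))]
  have hcongr : Filter.liminf (fun n : ℕ => ((B γ n / A n : ℝ) : EReal)) atTop
      = Filter.liminf (fun _ : ℕ => ((1:ℝ) : EReal)) atTop := by
    apply Filter.liminf_congr
    filter_upwards [key] with n h
    rw [h]
  rw [hcongr, Filter.liminf_const]
  exact_mod_cast rfl
end

section
/- Let k ≥ 1 be an integer and define a sequence (a_m)_{m≥0} of complex numbers by a_m = (n^k)! if m = n^k for some n ∈ ℕ, n ≥ 1, and a_m = 0 otherwise. Then limsup_{m→∞} |a_m|^{1/m} = ∞ (the power series ∑ a_m z^m has null radius of convergence) and its gauge equals 1; that is, for every γ ∈ (0,1), liminf_{n→∞} ( max_{(1-γ)n ≤ j ≤ n} |a_j|^{1/j} ) / ( max_{1 ≤ j ≤ n} |a_j|^{1/j} ) = 1. -/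
/-!
The `j`-th root of `j!` is nondecreasing in `j` (because `j! ≤ (j + 1) ^ j`) and unbounded, so
`|a_j|^{1/j}` is unbounded along the perfect `k`-th powers and the radius of convergence is zero.
For the gauge, let `r ^ k ≤ n < (r + 1) ^ k`: on `[1, n]` the maximum of `|a_j|^{1/j}` is attained
at `j = r ^ k`, and `r ^ k / n ≥ (r / (r + 1)) ^ k → 1`, so for large `n` this point lies in every
window `[(1 - γ) n, n]`, where the window maximum therefore equals the full maximum.
-/

open Filter Nat
open scoped Classical Topology

lemma factorial_rpow_inv_le_succ (j : ℕ) :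
    (j ! : ℝ) ^ ((j : ℝ)⁻¹) ≤ ((j + 1)! : ℝ) ^ (((j + 1 : ℕ) : ℝ)⁻¹) := by
  rcases Nat.eq_zero_or_pos j with rfl | hj
  · simp
  have key : j ! ^ (j + 1) ≤ (j + 1)! ^ j :=
    calc j ! ^ (j + 1) = j ! ^ j * j ! := pow_succ _ _
      _ ≤ j ! ^ j * (j + 1) ^ j := by
          gcongr
          exact (Nat.factorial_le_pow j).trans (Nat.pow_le_pow_left (by omega) j)
      _ = (j + 1)! ^ j := by rw [Nat.factorial_succ, mul_pow, Nat.mul_comm]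
  rw [← pow_le_pow_iff_left₀ (by positivity) (by positivity)
    (Nat.mul_ne_zero hj.ne' j.succ_ne_zero), pow_mul,
    Real.rpow_inv_natCast_pow (by positivity) hj.ne', Nat.mul_comm, pow_mul,
    Real.rpow_inv_natCast_pow (by positivity) j.succ_ne_zero]
  exact_mod_cast key

lemma monotone_factorial_rpow_inv : Monotone fun j : ℕ => (j ! : ℝ) ^ ((j : ℝ)⁻¹) :=
  monotone_nat_of_le_succ factorial_rpow_inv_le_succ

lemma one_le_factorial_rpow_inv (j : ℕ) : 1 ≤ (j ! : ℝ) ^ ((j : ℝ)⁻¹) :=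
  Real.one_le_rpow (Nat.one_le_cast.2 j.factorial_pos) (by positivity)

lemma tendsto_factorial_rpow_inv_atTop :
    Tendsto (fun j : ℕ => (j ! : ℝ) ^ ((j : ℝ)⁻¹)) atTop atTop := by
  refine tendsto_atTop_atTop_of_monotone monotone_factorial_rpow_inv fun x => ?_
  obtain ⟨m, hm, hm0⟩ := ((FloorSemiring.tendsto_pow_div_factorial_atTop |x|).eventually
    (gt_mem_nhds one_pos)).and (eventually_gt_atTop 0) |>.exists
  have hpow : |x| ^ m ≤ (m ! : ℝ) :=
    ((div_lt_one (by exact_mod_cast m.factorial_pos)).1 hm).le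
  refine ⟨m, (le_abs_self x).trans ?_⟩
  rw [Real.le_rpow_inv_iff_of_pos (abs_nonneg x) (by positivity) (by exact_mod_cast hm0),
    Real.rpow_natCast]
  exact hpow

lemma exists_pow_le_lt_succ_pow {k : ℕ} (hk : k ≠ 0) {n : ℕ} (hn : 1 ≤ n) :
    ∃ r, 1 ≤ r ∧ r ^ k ≤ n ∧ n < (r + 1) ^ k := by
  induction n, hn using Nat.le_induction with
  | base => exact ⟨1, le_rfl, by simp, Nat.one_lt_pow hk (by norm_num)⟩
  | succ n _ ih =>
    obtain ⟨r, hr, hle, hlt⟩ := ih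
    rcases (Nat.add_one_le_of_lt hlt).lt_or_eq with hlt' | heq
    · exact ⟨r, hr, by omega, hlt'⟩
    · refine ⟨r + 1, by omega, heq.ge, ?_⟩
      rw [heq]
      exact Nat.pow_lt_pow_left (by omega) hk

lemma eventually_mul_succ_pow_le_pow (k : ℕ) {c : ℝ} (hc : c < 1) :
    ∀ᶠ r : ℕ in atTop, c * ((r : ℝ) + 1) ^ k ≤ (r : ℝ) ^ k := by
  have hlim : Tendsto (fun r : ℕ => ((r : ℝ) / (r + 1)) ^ k) atTop (𝓝 1) := by
    simpa using (tendsto_natCast_div_add_atTop (1 : ℝ)).pow k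
  filter_upwards [hlim.eventually (lt_mem_nhds hc)] with r hr
  rw [div_pow, lt_div_iff₀ (by positivity)] at hr
  exact hr.le

lemma eventually_exists_pow_mem_window {k : ℕ} (hk : k ≠ 0) {c : ℝ} (hc0 : 0 ≤ c)
    (hc : c < 1) :
    ∀ᶠ n : ℕ in atTop, ∃ r, 1 ≤ r ∧ c * n ≤ ((r ^ k : ℕ) : ℝ) ∧ r ^ k ≤ n ∧ n < (r + 1) ^ k := by
  obtain ⟨r₀, hr₀⟩ := eventually_atTop.1 (eventually_mul_succ_pow_le_pow k hc)
  filter_upwards [eventually_ge_atTop 1, eventually_ge_atTop (r₀ ^ k)] with n hn hnr₀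
  obtain ⟨r, hr, hle, hlt⟩ := exists_pow_le_lt_succ_pow hk hn
  have hrr₀ : r₀ ≤ r := by
    by_contra! h
    exact absurd (hnr₀.trans_lt hlt) (Nat.pow_le_pow_left h k).not_gt
  refine ⟨r, hr, ?_, hle, hlt⟩
  have hn' : (n : ℝ) ≤ ((r : ℝ) + 1) ^ k := by exact_mod_cast hlt.le
  calc c * n ≤ c * ((r : ℝ) + 1) ^ k := mul_le_mul_of_nonneg_left hn' hc0
    _ ≤ (r : ℝ) ^ k := hr₀ r hrr₀
    _ = ((r ^ k : ℕ) : ℝ) := by push_cast; rfl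

lemma div_eq_one_of_isGreatest_of_max_mem_window {α : ℕ → ℝ} {c : ℝ} {n m : ℕ} {A B : ℝ}
    (hA : IsGreatest {x | ∃ j : ℕ, 1 ≤ j ∧ j ≤ n ∧ x = α j} A)
    (hB : IsGreatest {x | ∃ j : ℕ, c * n ≤ j ∧ j ≤ n ∧ x = α j} B)
    (hm1 : 1 ≤ m) (hcm : c * n ≤ m) (hmn : m ≤ n)
    (hmax : ∀ j ≤ n, α j ≤ α m) (hpos : 0 < α m) : B / A = 1 := by
  have hAm : A = α m := by
    obtain ⟨j, -, hjn, rfl⟩ := hA.1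
    exact le_antisymm (hmax j hjn) (hA.2 ⟨m, hm1, hmn, rfl⟩)
  have hBm : B = α m := by
    obtain ⟨j, -, hjn, rfl⟩ := hB.1
    exact le_antisymm (hmax j hjn) (hB.2 ⟨m, hcm, hmn, rfl⟩)
  rw [hAm, hBm, div_self hpos.ne']

section PowerSupported

variable {k : ℕ} {a : ℕ → ℂ}

lemma norm_rpow_inv_eq_of_pow
    (ha : ∀ m : ℕ, a m = if ∃ n : ℕ, 1 ≤ n ∧ m = n ^ k then (m ! : ℂ) else 0)
    {m : ℕ} (hm : ∃ n : ℕ, 1 ≤ n ∧ m = n ^ k) :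
    ‖a m‖ ^ ((m : ℝ)⁻¹) = (m ! : ℝ) ^ ((m : ℝ)⁻¹) := by
  rw [ha, if_pos hm, Complex.norm_natCast]

lemma norm_rpow_inv_le_of_lt_succ_pow (hk : k ≠ 0)
    (ha : ∀ m : ℕ, a m = if ∃ n : ℕ, 1 ≤ n ∧ m = n ^ k then (m ! : ℂ) else 0)
    {r j : ℕ} (hr : 1 ≤ r) (hj : j < (r + 1) ^ k) :
    ‖a j‖ ^ ((j : ℝ)⁻¹) ≤ ‖a (r ^ k)‖ ^ (((r ^ k : ℕ) : ℝ)⁻¹) := by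
  rw [norm_rpow_inv_eq_of_pow ha ⟨r, hr, rfl⟩]
  by_cases hjpow : ∃ s : ℕ, 1 ≤ s ∧ j = s ^ k
  · obtain ⟨s, hs, rfl⟩ := hjpow
    rw [norm_rpow_inv_eq_of_pow ha ⟨s, hs, rfl⟩]
    have hsr : s ≤ r := Nat.lt_succ_iff.1 ((Nat.pow_lt_pow_iff_left hk).1 hj)
    exact monotone_factorial_rpow_inv (Nat.pow_le_pow_left hsr k)
  · rw [ha, if_neg hjpow, norm_zero]
    exact (Real.zero_rpow_le_one _).trans (one_le_factorial_rpow_inv _)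

lemma limsup_norm_rpow_inv_eq_top (hk : k ≠ 0)
    (ha : ∀ m : ℕ, a m = if ∃ n : ℕ, 1 ≤ n ∧ m = n ^ k then (m ! : ℂ) else 0) :
    limsup (fun m : ℕ => ((‖a m‖ ^ ((m : ℝ)⁻¹) : ℝ) : EReal)) atTop = ⊤ := by
  rw [EReal.eq_top_iff_forall_lt]
  intro x
  have hpows : ∃ᶠ m : ℕ in atTop, ∃ n : ℕ, 1 ≤ n ∧ m = n ^ k :=
    frequently_atTop.2 fun N => ⟨(N + 1) ^ k, Nat.le_self_pow hk _ |>.trans' N.le_succ,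
      N + 1, N.succ_pos, rfl⟩
  have hfreq : ∃ᶠ m : ℕ in atTop,
      ((x + 1 : ℝ) : EReal) ≤ ((‖a m‖ ^ ((m : ℝ)⁻¹) : ℝ) : EReal) := by
    refine (hpows.and_eventually
      (tendsto_factorial_rpow_inv_atTop.eventually_ge_atTop (x + 1))).mono ?_
    rintro m ⟨hm, hx⟩
    rw [norm_rpow_inv_eq_of_pow ha hm]
    exact EReal.coe_le_coe_iff.2 hx
  exact (EReal.coe_lt_coe_iff.2 (lt_add_one x)).trans_le (le_limsup_of_frequently_le' hfreq)

end PowerSupported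

/-- Example 2.1, second part. For an integer `k ≥ 1`, the power
series `f_k(z) = ∑_{n≥1} (n^k)! z^{n^k}` (so `a_m = m!` if `m = n^k` for some `n ≥ 1`,
and `a_m = 0` otherwise) has null radius of convergence and gauge `1`: for every
`γ ∈ (0,1)`,
`liminf_n (max_{(1-γ)n ≤ j ≤ n} |a_j|^{1/j}) / (max_{1 ≤ j ≤ n} |a_j|^{1/j}) = 1`. -/
theorem stmt_17 (k : ℕ) (a : ℕ → ℂ) (A : ℕ → ℝ) (B : ℝ → ℕ → ℝ)
    (hk : 1 ≤ k)
    (ha : ∀ m : ℕ, a m = if ∃ n : ℕ, 1 ≤ n ∧ m = n ^ k then (Nat.factorial m : ℂ) else 0)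
    (hA : ∀ n : ℕ, 1 ≤ n → IsGreatest
      {x : ℝ | ∃ j : ℕ, 1 ≤ j ∧ j ≤ n ∧ x = ‖a j‖ ^ ((j : ℝ)⁻¹)} (A n))
    (hB : ∀ γ ∈ Set.Ioo (0 : ℝ) 1, ∀ n : ℕ, 1 ≤ n → IsGreatest
      {x : ℝ | ∃ j : ℕ, (1 - γ) * (n : ℝ) ≤ (j : ℝ) ∧ j ≤ n ∧
        x = ‖a j‖ ^ ((j : ℝ)⁻¹)} (B γ n)) :
    Filter.limsup
      (fun m : ℕ => ((‖a m‖ ^ ((m : ℝ)⁻¹) : ℝ) : EReal)) Filter.atTop = ⊤ ∧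
    (∀ γ ∈ Set.Ioo (0 : ℝ) 1,
      Filter.liminf (fun n : ℕ => ((B γ n / A n : ℝ) : EReal)) Filter.atTop = 1) := by
  have hk0 : k ≠ 0 := by omega
  refine ⟨limsup_norm_rpow_inv_eq_top hk0 ha, fun γ hγ => ?_⟩
  have hev : ∀ᶠ n : ℕ in atTop, B γ n / A n = 1 := by
    filter_upwards [eventually_ge_atTop 1,
      eventually_exists_pow_mem_window hk0 (sub_nonneg.2 hγ.2.le) (sub_lt_self 1 hγ.1)]
      with n hn ⟨r, hr, hwin, hle, hlt⟩
    refine div_eq_one_of_isGreatest_of_max_mem_window (hA n hn) (hB γ hγ n hn)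
      (Nat.one_le_pow _ _ hr) hwin hle
      (fun j hj => norm_rpow_inv_le_of_lt_succ_pow hk0 ha hr (hj.trans_lt hlt)) ?_
    rw [norm_rpow_inv_eq_of_pow ha ⟨r, hr, rfl⟩]
    exact one_pos.trans_le (one_le_factorial_rpow_inv _)
  rw [liminf_congr (hev.mono fun n hn => by rw [hn, EReal.coe_one]), liminf_const]
end
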